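/- arXiv:2009.04266 — 8 statements merged into one kernel-verified Lean document; each statement's English description precedes it below -/
import Mathlib

section
/- Let (X,d) be a metric space, let φ be an entropy function with φ⁻¹({0}) = {1}, let λ : [0,∞) → [0,∞] satisfy λ⁻¹({0}) = {0}, and let p, q > 0. Assume that for every c ∈ [0,∞] and r, s ≥ 0 there exists θ* ≥ 0 attaining the infimum defining H_c(r,s), i.e. H_c(r,s) = θ*·L_c(r/θ*, s/θ*). Then the cone cost D_{Co[X]} is definite on the cone Co[X]: D_{Co[X]}([x,r],[y,s]) = 0 if and only if (r = s = 0) or (x = y and r = s). -/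
/-!
Convexity and `φ 1 = 0` make the slopes of `φ` grow, so `φ r / r ≥ φ 2 / 2 > 0` for `r ≥ 2`;
hence `φ'_∞ > 0` and the reverse entropy `ψ` vanishes only at `1`, like `φ`. A term
`θ · L_c(r/θ, s/θ)` with `θ > 0` therefore vanishes exactly when `c = 0` and `r = s = θ`, and the
`θ = 0` term `φ(0)(r + s)` exactly when `r = s = 0`. Since the infimum defining `H_c` is attained,
`H_c(r, s) = 0` iff one of these terms vanishes; with `c = λ(d(x, y))` and the injectivity of
`t ↦ t ^ p` this is the claim.
-/

open MeasureTheory ENNReal NNReal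

noncomputable section

/-- The recession constant `φ'_∞ = lim_{r → ∞} φ(r)/r` of an entropy function. -/
def recessionConst (φ : ℝ≥0 → ℝ≥0∞) : ℝ≥0∞ :=
  Filter.limsup (fun r : ℝ≥0 => φ r / (r : ℝ≥0∞)) Filter.atTop

/-- An entropy function: convex, lower semicontinuous, `φ 1 = 0`. -/
def IsEntropy (φ : ℝ≥0 → ℝ≥0∞) : Prop :=
  ConvexOn ℝ≥0 Set.univ φ ∧ LowerSemicontinuous φ ∧ φ 1 = 0

/-- The reverse entropy `ψ(r) = r·φ(1/r)` for `r > 0`, with `ψ(0) = φ'_∞`. -/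
def reverseEnt (φ : ℝ≥0 → ℝ≥0∞) (r : ℝ≥0) : ℝ≥0∞ :=
  if r = 0 then recessionConst φ else (r : ℝ≥0∞) * φ r⁻¹

/-- The cost `L_c(r,s) = c + ψ(r) + ψ(s)`. -/
def Lcost (φ : ℝ≥0 → ℝ≥0∞) (c : ℝ≥0∞) (r s : ℝ≥0) : ℝ≥0∞ :=
  c + reverseEnt φ r + reverseEnt φ s

/-- The perspective term `θ·L_c(r/θ, s/θ)`, with the `θ = 0` term interpreted as
`ψ'_∞·(r+s) = φ(0)·(r+s)`. -/
def persp (φ : ℝ≥0 → ℝ≥0∞) (c : ℝ≥0∞) (r s θ : ℝ≥0) : ℝ≥0∞ :=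
  if θ = 0 then φ 0 * ((r : ℝ≥0∞) + (s : ℝ≥0∞))
  else (θ : ℝ≥0∞) * Lcost φ c (r / θ) (s / θ)

/-- `H_c(r,s) = inf_{θ ≥ 0} θ·L_c(r/θ, s/θ)`, the perspective transform of `L_c`. -/
def Hcost (φ : ℝ≥0 → ℝ≥0∞) (c : ℝ≥0∞) (r s : ℝ≥0) : ℝ≥0∞ :=
  ⨅ θ : ℝ≥0, persp φ c r s θ

theorem ConvexOn.succ_mul_apply_two_le {φ : ℝ≥0 → ℝ≥0∞} (hφ : ConvexOn ℝ≥0 Set.univ φ)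
    (h1 : φ 1 = 0) (n : ℕ) : (n + 1 : ℝ≥0∞) * φ 2 ≤ φ (n + 2) := by
  have hn : (n + 1 : ℝ≥0) ≠ 0 := by positivity
  have hcomb : (n / (n + 1) : ℝ≥0) • (1 : ℝ≥0) + (n + 1 : ℝ≥0)⁻¹ • ((n : ℝ≥0) + 2) = 2 := by
    simp only [smul_eq_mul]
    field_simp
    ring
  have hsum : (n / (n + 1) : ℝ≥0) + (n + 1 : ℝ≥0)⁻¹ = 1 := by
    field_simp
  have h := hφ.2 (Set.mem_univ 1) (Set.mem_univ ((n : ℝ≥0) + 2)) zero_le zero_le hsum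
  rw [hcomb, h1, smul_zero, zero_add, ENNReal.smul_def, smul_eq_mul] at h
  calc (n + 1 : ℝ≥0∞) * φ 2 ≤ (n + 1 : ℝ≥0∞) * ((n + 1 : ℝ≥0)⁻¹ * φ (n + 2)) := by gcongr
    _ = φ (n + 2) := by
      rw [← mul_assoc, ENNReal.coe_inv hn]
      push_cast
      rw [ENNReal.mul_inv_cancel (by positivity) (by simp), one_mul]

theorem ConvexOn.half_apply_two_le_div {φ : ℝ≥0 → ℝ≥0∞} (hφ : ConvexOn ℝ≥0 Set.univ φ)
    (h1 : φ 1 = 0) (n : ℕ) : φ 2 / 2 ≤ φ (n + 2) / ((n + 2 : ℝ≥0) : ℝ≥0∞) := by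
  have hn : ((n + 2 : ℝ≥0) : ℝ≥0∞) ≠ 0 := by positivity
  rw [ENNReal.le_div_iff_mul_le (.inl hn) (.inl ENNReal.coe_ne_top)]
  calc φ 2 / 2 * ((n + 2 : ℝ≥0) : ℝ≥0∞) = φ 2 * (((n + 2 : ℝ≥0) : ℝ≥0∞) / 2) := by
        simp only [div_eq_mul_inv]; ring
    _ ≤ φ 2 * (n + 1) := by
        gcongr
        rw [ENNReal.div_le_iff (by simp) (by simp)]
        push_cast
        norm_cast
        omega
    _ ≤ φ (n + 2) := by rw [mul_comm]; exact hφ.succ_mul_apply_two_le h1 n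

theorem ConvexOn.apply_two_div_two_le_recessionConst {φ : ℝ≥0 → ℝ≥0∞}
    (hφ : ConvexOn ℝ≥0 Set.univ φ) (h1 : φ 1 = 0) : φ 2 / 2 ≤ recessionConst φ := by
  refine Filter.le_limsup_of_frequently_le' (Filter.frequently_atTop.2 fun a => ?_)
  refine ⟨⌈a⌉₊ + 2, ?_, hφ.half_apply_two_le_div h1 _⟩
  exact (Nat.le_ceil a).trans (by simp)

theorem recessionConst_ne_zero {φ : ℝ≥0 → ℝ≥0∞} (hφ : IsEntropy φ) (h2 : φ 2 ≠ 0) :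
    recessionConst φ ≠ 0 := by
  refine ne_bot_of_le_ne_bot ?_ (hφ.1.apply_two_div_two_le_recessionConst hφ.2.2)
  simpa [ENNReal.div_eq_zero_iff] using h2

theorem reverseEnt_eq_zero_iff {φ : ℝ≥0 → ℝ≥0∞} (hφ : IsEntropy φ)
    (hφ0 : ∀ t, φ t = 0 ↔ t = 1) (r : ℝ≥0) : reverseEnt φ r = 0 ↔ r = 1 := by
  rcases eq_or_ne r 0 with rfl | hr
  · have h2 : φ 2 ≠ 0 := by norm_num [hφ0]
    simp [reverseEnt, recessionConst_ne_zero hφ h2]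
  · simp [reverseEnt, hr, hφ0]

theorem persp_zero_eq_zero_iff {φ : ℝ≥0 → ℝ≥0∞} (hφ0 : φ 0 ≠ 0) (c : ℝ≥0∞) (r s : ℝ≥0) :
    persp φ c r s 0 = 0 ↔ r = 0 ∧ s = 0 := by
  simp [persp, hφ0]

theorem persp_eq_zero_iff_of_ne_zero {φ : ℝ≥0 → ℝ≥0∞} (hφ : IsEntropy φ)
    (hφ0 : ∀ t, φ t = 0 ↔ t = 1) (c : ℝ≥0∞) (r s : ℝ≥0) {θ : ℝ≥0} (hθ : θ ≠ 0) :
    persp φ c r s θ = 0 ↔ c = 0 ∧ r = θ ∧ s = θ := by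
  simp [persp, hθ, Lcost, reverseEnt_eq_zero_iff hφ hφ0, div_eq_one_iff_eq hθ, and_assoc]

theorem exists_persp_eq_zero_iff {φ : ℝ≥0 → ℝ≥0∞} (hφ : IsEntropy φ)
    (hφ0 : ∀ t, φ t = 0 ↔ t = 1) (c : ℝ≥0∞) (r s : ℝ≥0) :
    (∃ θ, persp φ c r s θ = 0) ↔ (r = 0 ∧ s = 0) ∨ (c = 0 ∧ r = s) := by
  have hφ00 : φ 0 ≠ 0 := by simp [hφ0]
  constructor
  · rintro ⟨θ, hθ⟩
    rcases eq_or_ne θ 0 with rfl | hθ0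
    · exact .inl ((persp_zero_eq_zero_iff hφ00 c r s).1 hθ)
    · obtain ⟨hc, rfl, rfl⟩ := (persp_eq_zero_iff_of_ne_zero hφ hφ0 c r s hθ0).1 hθ
      exact .inr ⟨hc, rfl⟩
  · intro h
    by_cases hrs : r = 0 ∧ s = 0
    · exact ⟨0, (persp_zero_eq_zero_iff hφ00 c r s).2 hrs⟩
    · obtain ⟨hc, rfl⟩ := h.resolve_left hrs
      have hr : r ≠ 0 := fun hr => hrs ⟨hr, hr⟩
      exact ⟨r, (persp_eq_zero_iff_of_ne_zero hφ hφ0 c r r hr).2 ⟨hc, rfl, rfl⟩⟩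

theorem Hcost_eq_zero_iff_exists_persp_eq_zero {φ : ℝ≥0 → ℝ≥0∞} {c : ℝ≥0∞} {r s : ℝ≥0}
    (hattain : ∃ θ, Hcost φ c r s = persp φ c r s θ) :
    Hcost φ c r s = 0 ↔ ∃ θ, persp φ c r s θ = 0 := by
  refine ⟨fun h => ?_, fun ⟨θ, hθ⟩ => le_antisymm (hθ ▸ iInf_le _ θ) zero_le⟩
  obtain ⟨θ, hθ⟩ := hattain
  exact ⟨θ, hθ ▸ h⟩

/-- The cone cost `D_{Co[X]}([x,r],[y,s]) = H_{λ(d(x,y))}(r^p, s^p)^{1/q}`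
is definite on the cone over a metric space `X`: it vanishes iff `r = s = 0` or
(`x = y` and `r = s`). -/
theorem cone_cost_definite {X : Type*} [MetricSpace X]
    (φ : ℝ≥0 → ℝ≥0∞) (hφ : IsEntropy φ) (hφ0 : ∀ t, φ t = 0 ↔ t = 1)
    (lam : ℝ≥0 → ℝ≥0∞) (hlam : ∀ t, lam t = 0 ↔ t = 0)
    (p q : ℝ) (hp : 0 < p) (hq : 0 < q)
    (hattain : ∀ (c : ℝ≥0∞) (r s : ℝ≥0), ∃ θ : ℝ≥0, Hcost φ c r s = persp φ c r s θ)
    (x y : X) (r s : ℝ≥0) :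
    (Hcost φ (lam (nndist x y)) (r ^ p) (s ^ p)) ^ (1 / q) = 0 ↔
      (r = 0 ∧ s = 0) ∨ (x = y ∧ r = s) := by
  rw [ENNReal.rpow_eq_zero_iff_of_pos (by positivity),
    Hcost_eq_zero_iff_exists_persp_eq_zero (hattain _ _ _), exists_persp_eq_zero_iff hφ hφ0,
    hlam, nndist_eq_zero, NNReal.rpow_eq_rpow_iff hp.ne']
  simp [NNReal.rpow_eq_zero_iff, hp.ne']

end
end

section
/- Let X = (X, d_X, μ) and Y = (Y, d_Y, ν) be metric measure spaces, Δ a distance on [0,∞), λ : [0,∞) → [0,∞] a cost and φ an entropy function with reverse entropy ψ. For any finite positive Borel measure π on X × Y with marginals π₁, π₂, write the Lebesgue decompositions μ = f·π₁ + μ⊥ and ν = g·π₂ + ν⊥ (so f = dμ/dπ₁, g = dν/dπ₂). Then L(π) = ∬ L_{λ(Γ(x,x',y,y'))}( f(x)·f(x'), g(y)·g(y') ) dπ(x,y) dπ(x',y') + ψ'_∞·( |(μ⊗μ)⊥| + |(ν⊗ν)⊥| ), where (μ⊗μ)⊥ denotes the singular part of μ⊗μ with respect to π₁⊗π₁, (ν⊗ν)⊥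 the singular part of ν⊗ν with respect to π₂⊗π₂, and |σ| the total mass of σ. -/
open MeasureTheory ENNReal NNReal

noncomputable section

/-- The Csiszár divergence `D_φ(μ|ν) = ∫ φ(dμ/dν) dν + φ'_∞ · μ⊥(X)`. -/
def csiszarDiv {α : Type*} [MeasurableSpace α] (φ : ℝ≥0 → ℝ≥0∞) (μ ν : Measure α) : ℝ≥0∞ :=
  (∫⁻ x, φ (μ.rnDeriv ν x).toNNReal ∂ν) + recessionConst φ * μ.singularPart ν Set.univ

/-- The Gromov--Wasserstein integrand `λ(Γ(x,x',y,y')) = λ(Δ(d_X(x,x'), d_Y(y,y')))`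
on pairs `((x,y),(x',y'))`. -/
def gwCost {X Y : Type*} [MetricSpace X] [MetricSpace Y]
    (Δ : ℝ≥0 → ℝ≥0 → ℝ≥0) (lam : ℝ≥0 → ℝ≥0∞) (z : (X × Y) × (X × Y)) : ℝ≥0∞ :=
  lam (Δ (nndist z.1.1 z.2.1) (nndist z.1.2 z.2.2))

/-- The unbalanced Gromov--Wasserstein functional
`L(π) = ∬ λ(Γ) dπ dπ + D_φ(π₁⊗π₁|μ⊗μ) + D_φ(π₂⊗π₂|ν⊗ν)`. -/
def UGWfun {X Y : Type*} [MetricSpace X] [MetricSpace Y]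
    [MeasurableSpace X] [MeasurableSpace Y]
    (Δ : ℝ≥0 → ℝ≥0 → ℝ≥0) (lam : ℝ≥0 → ℝ≥0∞) (φ : ℝ≥0 → ℝ≥0∞)
    (μ : Measure X) (ν : Measure Y) (π : Measure (X × Y)) : ℝ≥0∞ :=
  (∫⁻ z, gwCost Δ lam z ∂(π.prod π))
    + csiszarDiv φ (π.fst.prod π.fst) (μ.prod μ)
    + csiszarDiv φ (π.snd.prod π.snd) (ν.prod ν)

/-! For σ-finite `σ, τ` with Lebesgue decompositions `τ = (dτ/dσ)·σ + τ⊥` and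
`σ = (dσ/dτ)·τ + σ⊥`, the two densities are reciprocal σ-a.e. on `{dτ/dσ ≠ 0}`, `dσ/dτ`
vanishes τ⊥-a.e., and `σ{dτ/dσ = 0} = σ⊥(X)`. Splitting `∫ φ(dσ/dτ) dτ` along the
decomposition of `τ` therefore gives `D_φ(σ|τ) = ∫ ψ(dτ/dσ) dσ + φ(0)·τ⊥(X)`, the set
`{dτ/dσ = 0}` carrying the term `φ'_∞·σ⊥(X)` through `ψ(0) = φ'_∞`. Applied to
`π₁⊗π₁` and `μ⊗μ`, where `d(μ⊗μ)/d(π₁⊗π₁) = f ⊗ f`, and pulled back to `π⊗π` along the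
marginal projections, this produces the reverse-entropy terms of `L_{λ(Γ)}`. -/

namespace MeasureTheory.Measure

section Duality

variable {α : Type*} [MeasurableSpace α] (σ τ : Measure α) [SigmaFinite σ] [SigmaFinite τ]

lemma ae_rnDeriv_eq_inv_rnDeriv :
    ∀ᵐ x ∂σ, τ.rnDeriv σ x ≠ 0 → σ.rnDeriv τ x = (τ.rnDeriv σ x)⁻¹ := by
  set τac := σ.withDensity (τ.rnDeriv σ)
  have hac : τac ≪ σ := withDensity_absolutelyContinuous σ _
  have h_add : σ.rnDeriv τ =ᵐ[τac] σ.rnDeriv τac := by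
    have := rnDeriv_add_right_of_mutuallySingular (μ := σ)
      ((mutuallySingular_singularPart τ σ).symm.withDensity (f := τ.rnDeriv σ))
    rwa [add_comm, ← haveLebesgueDecomposition_add] at this
  have h_dens : τac.rnDeriv σ =ᵐ[τac] τ.rnDeriv σ :=
    hac.ae_le (rnDeriv_withDensity σ (measurable_rnDeriv τ σ))
  refine (ae_withDensity_iff (measurable_rnDeriv τ σ)).1 ?_
  filter_upwards [h_add, h_dens, inv_rnDeriv hac] with x h_add h_dens h_inv
  rw [h_add, ← h_inv, Pi.inv_apply, h_dens]

lemma measure_setOf_rnDeriv_eq_zero :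
    σ {x | τ.rnDeriv σ x = 0} = σ.singularPart τ Set.univ := by
  set S := {x | τ.rnDeriv σ x = 0}
  have hS : MeasurableSet S := measurableSet_eq_fun (measurable_rnDeriv τ σ) measurable_const
  have h_ac_part : τ.withDensity (σ.rnDeriv τ) S = 0 := by
    have h_sing : σ.rnDeriv τ =ᵐ[(τ.singularPart σ).restrict S] 0 :=
      ae_restrict_of_ae (rnDeriv_eq_zero_ae_singularPart σ τ)
    have h_null : (σ.withDensity (τ.rnDeriv σ)).restrict S = 0 := by
      rw [restrict_eq_zero, withDensity_apply _ hS]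
      exact setLIntegral_eq_zero hS fun x hx => hx
    calc τ.withDensity (σ.rnDeriv τ) S
        = ∫⁻ x in S, σ.rnDeriv τ x ∂(τ.singularPart σ + σ.withDensity (τ.rnDeriv σ)) := by
          rw [← τ.haveLebesgueDecomposition_add σ, withDensity_apply _ hS]
      _ = 0 := by
          rw [restrict_add, lintegral_add_measure, h_null, lintegral_zero_measure, add_zero,
            lintegral_congr_ae h_sing, Pi.zero_def, lintegral_zero]
  calc σ S = (σ.singularPart τ + τ.withDensity (σ.rnDeriv τ)) S :=
        congrArg (· S) (σ.haveLebesgueDecomposition_add τ)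
    _ = σ.singularPart τ S := by rw [add_apply, h_ac_part, add_zero]
    _ = σ.singularPart τ Set.univ :=
        measure_congr (ae_eq_univ.2 (rnDeriv_eq_zero_ae_singularPart τ σ))

lemma lintegral_comp_rnDeriv {F : ℝ≥0∞ → ℝ≥0∞} (hF : Measurable F) :
    ∫⁻ x, F (σ.rnDeriv τ x) ∂τ
      = F 0 * τ.singularPart σ Set.univ + ∫⁻ x, τ.rnDeriv σ x * F (σ.rnDeriv τ x) ∂σ := by
  have h_sing : ∀ᵐ x ∂(τ.singularPart σ), F (σ.rnDeriv τ x) = F 0 := by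
    filter_upwards [rnDeriv_eq_zero_ae_singularPart σ τ] with x hx
    rw [hx]
  calc ∫⁻ x, F (σ.rnDeriv τ x) ∂τ
      = ∫⁻ x, F (σ.rnDeriv τ x) ∂(τ.singularPart σ + σ.withDensity (τ.rnDeriv σ)) := by
        rw [← τ.haveLebesgueDecomposition_add σ]
    _ = _ := by
        rw [lintegral_add_measure, lintegral_congr_ae h_sing, lintegral_const,
          lintegral_withDensity_eq_lintegral_mul _ (measurable_rnDeriv _ _)
            (by fun_prop : Measurable fun x => F (σ.rnDeriv τ x))]
        rfl

end Duality

section Prod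

variable {α β : Type*} [MeasurableSpace α] [MeasurableSpace β]

lemma MutuallySingular.prod_left {μ ρ : Measure α} (h : μ ⟂ₘ ρ) (ν κ : Measure β)
    [SFinite ν] [SFinite κ] : μ.prod ν ⟂ₘ ρ.prod κ := by
  refine ⟨h.nullSet ×ˢ Set.univ, h.measurableSet_nullSet.prod .univ, ?_, ?_⟩
  · rw [prod_prod, h.measure_nullSet, zero_mul]
  · rw [show (h.nullSet ×ˢ (Set.univ : Set β))ᶜ = h.nullSetᶜ ×ˢ Set.univ by ext; simp,
      prod_prod, h.measure_compl_nullSet, zero_mul]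

lemma MutuallySingular.prod_right {ν κ : Measure β} (h : ν ⟂ₘ κ) (μ ρ : Measure α)
    [SFinite ν] [SFinite κ] : μ.prod ν ⟂ₘ ρ.prod κ := by
  refine ⟨Set.univ ×ˢ h.nullSet, MeasurableSet.univ.prod h.measurableSet_nullSet, ?_, ?_⟩
  · rw [prod_prod, h.measure_nullSet, mul_zero]
  · rw [show ((Set.univ : Set α) ×ˢ h.nullSet)ᶜ = Set.univ ×ˢ h.nullSetᶜ by ext; simp,
      prod_prod, h.measure_compl_nullSet, mul_zero]

lemma rnDeriv_prod (μ ρ : Measure α) (ν κ : Measure β) [SigmaFinite μ] [SigmaFinite ρ]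
    [SigmaFinite ν] [SigmaFinite κ] :
    (μ.prod ν).rnDeriv (ρ.prod κ) =ᵐ[ρ.prod κ] fun p => μ.rnDeriv ρ p.1 * ν.rnDeriv κ p.2 := by
  have h_dec : μ.prod ν = ((μ.singularPart ρ).prod ν
        + (ρ.withDensity (μ.rnDeriv ρ)).prod (ν.singularPart κ))
      + (ρ.prod κ).withDensity (fun p => μ.rnDeriv ρ p.1 * ν.rnDeriv κ p.2) := by
    rw [← prod_withDensity (measurable_rnDeriv μ ρ) (measurable_rnDeriv ν κ), add_assoc,
      ← prod_add, ← ν.haveLebesgueDecomposition_add κ, ← add_prod,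
      ← μ.haveLebesgueDecomposition_add ρ]
  have h_sing : ((μ.singularPart ρ).prod ν
      + (ρ.withDensity (μ.rnDeriv ρ)).prod (ν.singularPart κ)) ⟂ₘ ρ.prod κ :=
    ((mutuallySingular_singularPart μ ρ).prod_left ν κ).add_left
      ((mutuallySingular_singularPart ν κ).prod_right _ ρ)
  exact (eq_rnDeriv (by fun_prop) h_sing h_dec).symm

end Prod

end MeasureTheory.Measure

open MeasureTheory.Measure

@[fun_prop]
lemma measurable_reverseEnt {φ : ℝ≥0 → ℝ≥0∞} (hφ : Measurable φ) :
    Measurable (reverseEnt φ) :=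
  Measurable.ite (measurableSet_singleton 0) measurable_const
    (measurable_coe_nnreal_ennreal.mul (hφ.comp measurable_inv))

theorem csiszarDiv_eq_lintegral_reverseEnt {α : Type*} [MeasurableSpace α]
    {φ : ℝ≥0 → ℝ≥0∞} (hφ : Measurable φ) (σ τ : Measure α) [SigmaFinite σ] [SigmaFinite τ] :
    csiszarDiv φ σ τ
      = ∫⁻ x, reverseEnt φ (τ.rnDeriv σ x).toNNReal ∂σ + φ 0 * τ.singularPart σ Set.univ := by
  have h_pointwise : ∀ᵐ x ∂σ, reverseEnt φ (τ.rnDeriv σ x).toNNReal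
      = τ.rnDeriv σ x * φ (σ.rnDeriv τ x).toNNReal
        + {x | τ.rnDeriv σ x = 0}.indicator (fun _ => recessionConst φ) x := by
    filter_upwards [ae_rnDeriv_eq_inv_rnDeriv σ τ, rnDeriv_ne_top τ σ] with x h_inv h_fin
    by_cases h0 : τ.rnDeriv σ x = 0
    · simp [reverseEnt, h0]
    · rw [Set.indicator_of_notMem (show x ∉ {x | τ.rnDeriv σ x = 0} from h0), add_zero,
        reverseEnt, if_neg (ENNReal.toNNReal_ne_zero.2 ⟨h0, h_fin⟩), ENNReal.coe_toNNReal h_fin,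
        h_inv h0, ENNReal.toNNReal_inv]
  have hS : MeasurableSet {x | τ.rnDeriv σ x = 0} :=
    measurableSet_eq_fun (measurable_rnDeriv τ σ) measurable_const
  rw [csiszarDiv,
    lintegral_comp_rnDeriv σ τ (F := fun r => φ r.toNNReal) (hφ.comp measurable_toNNReal),
    lintegral_congr_ae h_pointwise, lintegral_add_right _ (measurable_const.indicator hS),
    lintegral_indicator_const hS, measure_setOf_rnDeriv_eq_zero, ENNReal.toNNReal_zero]
  ring

theorem csiszarDiv_prod {α β : Type*} [MeasurableSpace α] [MeasurableSpace β]
    {φ : ℝ≥0 → ℝ≥0∞} (hφ : Measurable φ) (μ ρ : Measure α) (ν κ : Measure β)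
    [SigmaFinite μ] [SigmaFinite ρ] [SigmaFinite ν] [SigmaFinite κ] :
    csiszarDiv φ (ρ.prod κ) (μ.prod ν)
      = ∫⁻ p, reverseEnt φ ((μ.rnDeriv ρ p.1).toNNReal * (ν.rnDeriv κ p.2).toNNReal) ∂(ρ.prod κ)
        + φ 0 * (μ.prod ν).singularPart (ρ.prod κ) Set.univ := by
  rw [csiszarDiv_eq_lintegral_reverseEnt hφ]
  congr 1
  refine lintegral_congr_ae ?_
  filter_upwards [rnDeriv_prod μ ρ ν κ] with p hp
  rw [hp, ENNReal.toNNReal_mul]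

lemma lintegral_map_prod_map {α β γ δ : Type*} [MeasurableSpace α] [MeasurableSpace β]
    [MeasurableSpace γ] [MeasurableSpace δ] {μ : Measure γ} {ν : Measure δ} [SFinite μ]
    [SFinite ν] {f : γ → α} {g : δ → β} (hf : Measurable f) (hg : Measurable g)
    {H : α × β → ℝ≥0∞} (hH : Measurable H) :
    ∫⁻ p, H p ∂((μ.map f).prod (ν.map g)) = ∫⁻ z, H (f z.1, g z.2) ∂(μ.prod ν) := by
  rw [map_prod_map _ _ hf hg, lintegral_map hH (hf.prodMap hg)]
  rfl

theorem ugw_functional_rewrite_general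
    {X Y : Type*} [MetricSpace X] [MeasurableSpace X] [MetricSpace Y] [MeasurableSpace Y]
    (μ : Measure X) (ν : Measure Y) [IsFiniteMeasure μ] [IsFiniteMeasure ν]
    (Δ : ℝ≥0 → ℝ≥0 → ℝ≥0)
    (lam : ℝ≥0 → ℝ≥0∞) (φ : ℝ≥0 → ℝ≥0∞) (hφ : IsEntropy φ)
    (π : Measure (X × Y)) [IsFiniteMeasure π] :
    UGWfun Δ lam φ μ ν π =
      (∫⁻ z, Lcost φ (gwCost Δ lam z)
          ((μ.rnDeriv π.fst z.1.1).toNNReal * (μ.rnDeriv π.fst z.2.1).toNNReal)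
          ((ν.rnDeriv π.snd z.1.2).toNNReal * (ν.rnDeriv π.snd z.2.2).toNNReal)
          ∂(π.prod π))
        + φ 0 * ((μ.prod μ).singularPart (π.fst.prod π.fst) Set.univ
            + (ν.prod ν).singularPart (π.snd.prod π.snd) Set.univ) := by
  have hφ_meas : Measurable φ := hφ.2.1.measurable
  rw [UGWfun, csiszarDiv_prod hφ_meas, csiszarDiv_prod hφ_meas, Measure.fst, Measure.snd,
    lintegral_map_prod_map measurable_fst measurable_fst,
    lintegral_map_prod_map measurable_snd measurable_snd]
  · simp only [Lcost]
    rw [lintegral_add_right _ (by fun_prop), lintegral_add_right _ (by fun_prop)]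
    ring
  all_goals fun_prop

/-- Rewriting of the UGW functional using the reverse entropy:
with `f = dμ/dπ₁`, `g = dν/dπ₂` the densities of the Lebesgue decompositions
`μ = f·π₁ + μ⊥`, `ν = g·π₂ + ν⊥`, one has
`L(π) = ∬ L_{λ(Γ)}(f(x)f(x'), g(y)g(y')) dπ dπ + ψ'_∞·(|(μ⊗μ)⊥| + |(ν⊗ν)⊥|)`,
where `ψ'_∞ = φ(0)` and the orthogonal parts are taken w.r.t. `π₁⊗π₁` and `π₂⊗π₂`. -/
theorem ugw_functional_rewrite
    {X Y : Type*} [MetricSpace X] [CompleteSpace X] [TopologicalSpace.SeparableSpace X]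
    [MeasurableSpace X] [BorelSpace X]
    [MetricSpace Y] [CompleteSpace Y] [TopologicalSpace.SeparableSpace Y]
    [MeasurableSpace Y] [BorelSpace Y]
    (μ : Measure X) (ν : Measure Y) [IsFiniteMeasure μ] [IsFiniteMeasure ν]
    (Δ : ℝ≥0 → ℝ≥0 → ℝ≥0)
    (hΔsymm : ∀ a b, Δ a b = Δ b a) (hΔself : ∀ a, Δ a a = 0)
    (hΔdef : ∀ a b, Δ a b = 0 → a = b)
    (hΔtri : ∀ a b c, Δ a c ≤ Δ a b + Δ b c)
    (lam : ℝ≥0 → ℝ≥0∞) (φ : ℝ≥0 → ℝ≥0∞) (hφ : IsEntropy φ)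
    (π : Measure (X × Y)) [IsFiniteMeasure π] :
    UGWfun Δ lam φ μ ν π =
      (∫⁻ z, Lcost φ (gwCost Δ lam z)
          ((μ.rnDeriv π.fst z.1.1).toNNReal * (μ.rnDeriv π.fst z.2.1).toNNReal)
          ((ν.rnDeriv π.snd z.1.2).toNNReal * (ν.rnDeriv π.snd z.2.2).toNNReal)
          ∂(π.prod π))
        + φ 0 * ((μ.prod μ).singularPart (π.fst.prod π.fst) Set.univ
            + (ν.prod ν).singularPart (π.snd.prod π.snd) Set.univ) :=
  ugw_functional_rewrite_general μ ν Δ lam φ hφ π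

end
end

section
/- Let μ and ρ be finite Borel measures on a measurable space X, and let μ = f·ρ + μ⊥ be the Lebesgue decomposition of μ with respect to ρ (f = dμ/dρ, μ⊥ ⟂ ρ). Then the Lebesgue decomposition of the product measure μ⊗μ with respect to ρ⊗ρ is μ⊗μ = (f⊗f)·(ρ⊗ρ) + (μ⊗μ)⊥, where the singular part is (μ⊗μ)⊥ = μ⊥ ⊗ (f·ρ) + (f·ρ) ⊗ μ⊥ + μ⊥ ⊗ μ⊥; in particular this measure is singular with respect to ρ⊗ρ, and d(μ⊗μ)/d(ρ⊗ρ)(x,x') = f(x)·f(x') for ρ⊗ρ-almost every (x,x'). -/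
open MeasureTheory ENNReal NNReal

noncomputable section

lemma aux_prod_withDensity {X : Type*} [MeasurableSpace X]
    (ρ : Measure X) [SFinite ρ] {f : X → ℝ≥0∞} (hf : Measurable f)
    [SigmaFinite (ρ.withDensity f)] :
    (ρ.withDensity f).prod (ρ.withDensity f)
      = (ρ.prod ρ).withDensity (fun z => f z.1 * f z.2) := by
  refine Measure.prod_eq (μ := ρ.withDensity f) (ν := ρ.withDensity f)
    fun s t hs ht => ?_
  rw [withDensity_apply _ (hs.prod ht), ← Measure.prod_restrict,
    lintegral_prod_mul (hf.aemeasurable) (hf.aemeasurable),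
    withDensity_apply _ hs, withDensity_apply _ ht]

lemma aux_sing_left {X : Type*} [MeasurableSpace X]
    {s ρ : Measure X} (ν : Measure X) (h : s ⟂ₘ ρ) [SFinite s] [SFinite ν] [SFinite ρ] :
    s.prod ν ⟂ₘ ρ.prod ρ := by
  obtain ⟨A, hA, hsA, hρA⟩ := h
  refine ⟨A ×ˢ Set.univ, hA.prod MeasurableSet.univ, ?_, ?_⟩
  · rw [Measure.prod_prod, hsA, zero_mul]
  · rw [Set.compl_prod_eq_union]
    refine measure_union_null ?_ ?_
    · rw [Measure.prod_prod, hρA, zero_mul]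
    · simp

lemma aux_sing_right {X : Type*} [MeasurableSpace X]
    {s ρ : Measure X} (ν : Measure X) (h : s ⟂ₘ ρ) [SFinite s] [SFinite ν] [SFinite ρ] :
    ν.prod s ⟂ₘ ρ.prod ρ := by
  obtain ⟨A, hA, hsA, hρA⟩ := h
  refine ⟨Set.univ ×ˢ A, MeasurableSet.univ.prod hA, ?_, ?_⟩
  · rw [Measure.prod_prod, hsA, mul_zero]
  · rw [Set.compl_prod_eq_union]
    refine measure_union_null ?_ ?_
    · simp
    · rw [Measure.prod_prod, hρA, mul_zero]

/-- Lebesgue decomposition of a product measure: if `μ = f·ρ + μ⊥` is the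
Lebesgue decomposition of `μ` w.r.t. `ρ` (with `f = dμ/dρ`), then
`μ⊗μ = (f⊗f)·(ρ⊗ρ) + (μ⊗μ)⊥` with singular part
`(μ⊗μ)⊥ = μ⊥⊗(f·ρ) + (f·ρ)⊗μ⊥ + μ⊥⊗μ⊥`; in particular this part is singular with
respect to `ρ⊗ρ`, and `d(μ⊗μ)/d(ρ⊗ρ)(x,x') = f(x)·f(x')` for `ρ⊗ρ`-a.e. `(x,x')`. -/
theorem lebesgue_decomposition_tensor
    {X : Type*} [MeasurableSpace X]
    (μ ρ : Measure X) [IsFiniteMeasure μ] [IsFiniteMeasure ρ] :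
    (μ.prod μ =
        (ρ.prod ρ).withDensity (fun z => μ.rnDeriv ρ z.1 * μ.rnDeriv ρ z.2)
          + ((μ.singularPart ρ).prod (ρ.withDensity (μ.rnDeriv ρ))
            + (ρ.withDensity (μ.rnDeriv ρ)).prod (μ.singularPart ρ)
            + (μ.singularPart ρ).prod (μ.singularPart ρ))) ∧
    ((μ.singularPart ρ).prod (ρ.withDensity (μ.rnDeriv ρ))
        + (ρ.withDensity (μ.rnDeriv ρ)).prod (μ.singularPart ρ)
        + (μ.singularPart ρ).prod (μ.singularPart ρ)) ⟂ₘ ρ.prod ρ ∧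
    (μ.prod μ).rnDeriv (ρ.prod ρ)
      =ᵐ[ρ.prod ρ] fun z => μ.rnDeriv ρ z.1 * μ.rnDeriv ρ z.2 := by
  set f := μ.rnDeriv ρ
  set s := μ.singularPart ρ
  set w := ρ.withDensity f
  have hf : Measurable f := Measure.measurable_rnDeriv μ ρ
  have hsing : s ⟂ₘ ρ := Measure.mutuallySingular_singularPart μ ρ
  have hdec : μ = w + s := (Measure.rnDeriv_add_singularPart μ ρ).symm
  have heq : μ.prod μ = (ρ.prod ρ).withDensity (fun z => f z.1 * f z.2)
      + (s.prod w + w.prod s + s.prod s) := by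
    conv_lhs => rw [hdec]
    rw [Measure.add_prod, Measure.prod_add, Measure.prod_add,
      aux_prod_withDensity ρ hf]
    abel
  have hsing' : (s.prod w + w.prod s + s.prod s) ⟂ₘ ρ.prod ρ :=
    ((aux_sing_left w hsing).add_left (aux_sing_right w hsing)).add_left
      (aux_sing_left s hsing)
  refine ⟨heq, hsing', ?_⟩
  refine (Measure.eq_rnDeriv (ν := ρ.prod ρ) (μ := μ.prod μ)
    (f := fun z => f z.1 * f z.2)
    ((hf.comp measurable_fst).mul (hf.comp measurable_snd)) hsing' ?_).symm
  rw [heq, add_comm]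
end
end

section
/- Let B be a real Banach space, C ⊆ B a convex subset, f : B → ℝ ∪ {+∞} a function, and k : B × B → ℝ a symmetric bilinear form which is negative on ΔC := Span({π − γ : π, γ ∈ C}), i.e. k(z,z) ≤ 0 for every z ∈ ΔC. Define L(π) = (1/2)·k(π,π) + 2·f(π) and F(π,γ) = (1/2)·k(π,γ) + f(π) + f(γ). Assume there exists π₀ ∈ C with L(π₀) < +∞. Then every minimizer (π*, γ*) of F over C × C satisfies F(π*, π*) = F(γ*, γ*) = F(π*, γ*). -/
open scoped ENNReal

noncomputable section

/-- The quadratic functional `L(π) = (1/2)·k(π,π) + 2·f(π)`, with values in `ℝ ∪ {±∞}`. -/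
def quadFun {B : Type*} [NormedAddCommGroup B] [NormedSpace ℝ B]
    (k : B →ₗ[ℝ] B →ₗ[ℝ] ℝ) (f : B → EReal) (π : B) : EReal :=
  ((1 / 2 * k π π : ℝ) : EReal) + 2 * f π

/-- The symmetrized (bi-convex relaxation) functional
`F(π,γ) = (1/2)·k(π,γ) + f(π) + f(γ)`. -/
def symmFun {B : Type*} [NormedAddCommGroup B] [NormedSpace ℝ B]
    (k : B →ₗ[ℝ] B →ₗ[ℝ] ℝ) (f : B → EReal) (π γ : B) : EReal :=
  ((1 / 2 * k π γ : ℝ) : EReal) + f π + f γ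

lemma ereal_two_mul (x : EReal) (hx : x ≠ ⊥) : (2 : EReal) * x = x + x := by
  induction x with
  | bot => exact absurd rfl hx
  | coe r =>
      rw [show (2:EReal) = ((2:ℝ):EReal) by norm_cast, ← EReal.coe_mul]
      norm_cast; ring
  | top => rw [EReal.mul_top_of_pos (by norm_num)]; rfl

/-- Let `C ⊆ B` be convex, `f : B → ℝ ∪ {+∞}`, and `k` a symmetric
bilinear form which is negative on `ΔC = Span{π − γ : π, γ ∈ C}`. If `L(π₀) < +∞` for
some `π₀ ∈ C`, then every minimizer `(π*, γ*)` of `F` over `C × C` satisfies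
`F(π*,π*) = F(γ*,γ*) = F(π*,γ*)`. -/
theorem quadratic_relaxation_tight
    {B : Type*} [NormedAddCommGroup B] [NormedSpace ℝ B] [CompleteSpace B]
    (C : Set B) (hC : Convex ℝ C)
    (f : B → EReal) (hf : ∀ x, f x ≠ ⊥)
    (k : B →ₗ[ℝ] B →ₗ[ℝ] ℝ) (hksymm : ∀ x y, k x y = k y x)
    (hkneg : ∀ z ∈ Submodule.span ℝ {z : B | ∃ π ∈ C, ∃ γ ∈ C, z = π - γ}, k z z ≤ 0)
    (π₀ : B) (hπ₀ : π₀ ∈ C) (hfin : quadFun k f π₀ < ⊤)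
    (πs γs : B) (hπs : πs ∈ C) (hγs : γs ∈ C)
    (hmin : ∀ π ∈ C, ∀ γ ∈ C, symmFun k f πs γs ≤ symmFun k f π γ) :
    symmFun k f πs πs = symmFun k f γs γs ∧
    symmFun k f πs γs = symmFun k f πs πs := by
  -- symmFun at π₀ equals quadFun
  have hquad : symmFun k f π₀ π₀ = quadFun k f π₀ := by
    simp only [symmFun, quadFun, ereal_two_mul (f π₀) (hf π₀), add_assoc]
  have hS : symmFun k f πs γs < ⊤ := lt_of_le_of_lt (le_of_le_of_eq (hmin π₀ hπ₀ π₀ hπ₀) hquad) hfin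
  have hfπT : f πs ≠ ⊤ := by
    intro h
    rw [symmFun, h] at hS
    rw [EReal.add_top_of_ne_bot (by exact_mod_cast EReal.coe_ne_bot _),
      EReal.top_add_of_ne_bot (hf γs)] at hS
    exact lt_irrefl _ hS
  have hfγT : f γs ≠ ⊤ := by
    intro h
    rw [symmFun, h] at hS
    rw [EReal.add_top_of_ne_bot ?_] at hS
    · exact lt_irrefl _ hS
    · intro hb
      exact hf πs (by rcases EReal.add_eq_bot_iff.mp hb with h1 | h1
                      · exact absurd h1 (EReal.coe_ne_bot _)
                      · exact h1)
  obtain ⟨a, ha⟩ : ∃ r : ℝ, f πs = (r : EReal) := ⟨(f πs).toReal, (EReal.coe_toReal hfπT (hf πs)).symm⟩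
  obtain ⟨b, hb⟩ : ∃ r : ℝ, f γs = (r : EReal) := ⟨(f γs).toReal, (EReal.coe_toReal hfγT (hf γs)).symm⟩
  -- key negativity inequality
  have hz : πs - γs ∈ Submodule.span ℝ {z : B | ∃ π ∈ C, ∃ γ ∈ C, z = π - γ} :=
    Submodule.subset_span ⟨πs, hπs, γs, hγs, rfl⟩
  have hkey : k πs πs + k γs γs ≤ 2 * k πs γs := by
    have := hkneg _ hz
    simp only [map_sub, LinearMap.sub_apply] at this
    have hsy := hksymm πs γs
    linarith
  -- minimality inequalities in ℝ
  have h1 : (1 / 2 * k πs γs : ℝ) + a + b ≤ 1 / 2 * k πs πs + a + a := by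
    have := hmin πs hπs πs hπs
    rw [symmFun, symmFun, ha, hb] at this
    exact_mod_cast this
  have h2 : (1 / 2 * k πs γs : ℝ) + a + b ≤ 1 / 2 * k γs γs + b + b := by
    have := hmin γs hγs γs hγs
    rw [symmFun, symmFun, ha, hb] at this
    exact_mod_cast this
  have e1 : (1 / 2 * k πs γs : ℝ) + a + b = 1 / 2 * k πs πs + a + a := by linarith
  have e2 : (1 / 2 * k πs γs : ℝ) + a + b = 1 / 2 * k γs γs + b + b := by linarith
  constructor
  · rw [symmFun, symmFun, ha, hb]
    exact_mod_cast (e1.symm.trans e2 : _)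
  · rw [symmFun, symmFun, ha, hb]
    exact_mod_cast e1

end
end

section
/- Let X = (X,d_X,μ) and Y = (Y,d_Y,ν) be compact metric measure spaces, λ : [0,∞) → [0,∞) a cost, ρ > 0 and ε ≥ 0. Assume the kernel λ(|d_X − d_Y|) is negative semi-definite in the sense that for all finite positive Borel measures η₁, η₂ on X × Y with η₁(X×Y) = η₂(X×Y), one has ∬ λ(|d_X(x,x') − d_Y(y,y')|) d(η₁−η₂)(x,y) d(η₁−η₂)(x',y') ≤ 0. Define F_ε(π,γ) = ∬ λ(|d_X(x,x') − d_Y(y,y')|) dπ(x,y) dγ(x',y') + ρ·KL(π₁⊗γ₁|μ⊗μ) + ρ·KL(π₂⊗γ₂|ν⊗ν) + ε·KL(π⊗γ|(μ⊗ν)⊗(μ⊗ν)). Then every minimizer (π*, γ*) of F_ε over pairs of finite positive Borel measures on X × Y with equal total mass m(π) = m(γ) satisfies F_ε(π*,γ*) = F_ε(π*,π*) = F_ε(γ*,γ*); i.e. the bi-convex relaxation of the entropic KL-unbalanced Gromov–Wasserstein problem is tight. -/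
open MeasureTheory ENNReal NNReal

noncomputable section

open Classical in
/-- The Kullback--Leibler divergence: `KL(μ|ν) = ∫ log(dμ/dν) dμ − m(μ) + m(ν)` when
`μ ≪ ν` (written in its equivalent nonnegative Csiszár form
`∫ (f·log f − f + 1) dν` with `f = dμ/dν`), and `+∞` otherwise. -/
def KLDiv {α : Type*} [MeasurableSpace α] (μ ν : Measure α) : ℝ≥0∞ :=
  if μ ≪ ν then
    ∫⁻ x, ENNReal.ofReal ((μ.rnDeriv ν x).toReal * Real.log (μ.rnDeriv ν x).toReal
      - (μ.rnDeriv ν x).toReal + 1) ∂ν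
  else ∞

/-- The Gromov--Wasserstein kernel `λ(|d_X(x,x') − d_Y(y,y')|)` on pairs
`((x,y),(x',y'))`. -/
def gwKer {X Y : Type*} [MetricSpace X] [MetricSpace Y] (lam : ℝ≥0 → ℝ≥0)
    (z : (X × Y) × (X × Y)) : ℝ≥0∞ :=
  (lam (Real.toNNReal |dist z.1.1 z.2.1 - dist z.1.2 z.2.2|) : ℝ≥0∞)

/-- The relaxed entropic KL-unbalanced Gromov--Wasserstein functional
`F_ε(π,γ) = ∬ λ(|d_X−d_Y|) dπ dγ + ρ·KL(π₁⊗γ₁|μ⊗μ) + ρ·KL(π₂⊗γ₂|ν⊗ν)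
  + ε·KL(π⊗γ|(μ⊗ν)⊗(μ⊗ν))`. -/
def Feps {X Y : Type*} [MetricSpace X] [MetricSpace Y]
    [MeasurableSpace X] [MeasurableSpace Y]
    (lam : ℝ≥0 → ℝ≥0) (ρ ε : ℝ≥0) (μ : Measure X) (ν : Measure Y)
    (π γ : Measure (X × Y)) : ℝ≥0∞ :=
  (∫⁻ z, gwKer lam z ∂(π.prod γ))
    + ρ * KLDiv (π.fst.prod γ.fst) (μ.prod μ)
    + ρ * KLDiv (π.snd.prod γ.snd) (ν.prod ν)
    + ε * KLDiv (π.prod γ) ((μ.prod ν).prod (μ.prod ν))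

/-!
For finite measures `π`, `γ` of equal mass, `F_ε(π,π) + F_ε(γ,γ) ≤ 2 F_ε(π,γ)`: the kernel term
satisfies this by negative semi-definiteness, and each KL term with equality. Indeed, the identity
`klFun (s t) + s + t = klFun s · t + s · klFun t + s t + 1` shows that `KL(α⊗β | μ⊗ν)` equals
`m(β) KL(α|μ) + m(α) KL(β|ν)` up to terms depending only on the masses. At a minimizer `(π, γ)`,
minimality gives `F_ε(π,γ) ≤ F_ε(π,π)` and `F_ε(π,γ) ≤ F_ε(γ,γ)`, and the inequality forces
equality in both.
-/

open InformationTheory Set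

section KLDivProd

variable {Z W : Type*} [MeasurableSpace Z] [MeasurableSpace W]

lemma KLDiv_eq_lintegral_klFun {α μ : Measure Z} (h : α ≪ μ) :
    KLDiv α μ = ∫⁻ x, ENNReal.ofReal (klFun (α.rnDeriv μ x).toReal) ∂μ := by
  rw [KLDiv, if_pos h]
  congr with x
  rw [klFun]
  ring_nf

lemma lintegral_ofReal_toReal_rnDeriv {α μ : Measure Z} [SigmaFinite α]
    [α.HaveLebesgueDecomposition μ] (h : α ≪ μ) :
    ∫⁻ x, ENNReal.ofReal (α.rnDeriv μ x).toReal ∂μ = α univ := by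
  rw [← Measure.lintegral_rnDeriv h]
  refine lintegral_congr_ae ?_
  filter_upwards [Measure.rnDeriv_lt_top α μ] with x hx
  exact ENNReal.ofReal_toReal hx.ne

lemma MeasureTheory.Measure.rnDeriv_prod_s12 {α μ : Measure Z} {β ν : Measure W}
    [IsFiniteMeasure α] [IsFiniteMeasure β] [SigmaFinite μ] [SigmaFinite ν]
    (hα : α ≪ μ) (hβ : β ≪ ν) :
    (α.prod β).rnDeriv (μ.prod ν) =ᵐ[μ.prod ν] fun z => α.rnDeriv μ z.1 * β.rnDeriv ν z.2 := by
  conv_lhs => rw [← Measure.withDensity_rnDeriv_eq α μ hα, ← Measure.withDensity_rnDeriv_eq β ν hβ,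
    prod_withDensity (Measure.measurable_rnDeriv α μ) (Measure.measurable_rnDeriv β ν)]
  exact Measure.rnDeriv_withDensity _ (by fun_prop)

lemma MeasureTheory.Measure.AbsolutelyContinuous.of_prod_left {α μ : Measure Z} {β ν : Measure W}
    [SFinite β] [SFinite ν] (h : α.prod β ≪ μ.prod ν) (hβ : β ≠ 0) : α ≪ μ := by
  refine Measure.AbsolutelyContinuous.mk fun s hs hμs => ?_
  have : α s * β univ = 0 := by
    rw [← Measure.prod_prod]
    exact h (by rw [Measure.prod_prod, hμs, zero_mul])
  simpa [hβ] using this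

lemma MeasureTheory.Measure.AbsolutelyContinuous.of_prod_right {α μ : Measure Z} {β ν : Measure W}
    [SFinite α] [SFinite β] [SFinite μ] [SFinite ν] (h : α.prod β ≪ μ.prod ν) (hα : α ≠ 0) :
    β ≪ ν := by
  refine Measure.AbsolutelyContinuous.of_prod_left (β := α) (ν := μ) ?_ hα
  simpa [Measure.prod_swap] using h.map measurable_swap

/-- The factors `1` give every term the form `f z.1 * g z.2` expected by `lintegral_prod_mul`. -/
lemma ofReal_klFun_mul_add {s t : ℝ} (hs : 0 ≤ s) (ht : 0 ≤ t) :
    ENNReal.ofReal (klFun (s * t)) + ENNReal.ofReal s * 1 + 1 * ENNReal.ofReal t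
      = ENNReal.ofReal (klFun s) * ENNReal.ofReal t + ENNReal.ofReal s * ENNReal.ofReal (klFun t)
        + ENNReal.ofReal s * ENNReal.ofReal t + 1 * 1 := by
  have hst : klFun (s * t) + s + t = klFun s * t + s * klFun t + s * t + 1 := by
    rcases hs.eq_or_lt with rfl | hs'
    · simp only [zero_mul, klFun_zero]; ring
    rcases ht.eq_or_lt with rfl | ht'
    · simp only [mul_zero, klFun_zero]; ring
    simp only [klFun, Real.log_mul hs'.ne' ht'.ne']
    ring
  rw [← ENNReal.toReal_eq_toReal_iff' (by finiteness) (by finiteness)]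
  simp [ENNReal.toReal_add, ENNReal.mul_ne_top, hs, ht, klFun_nonneg hs, klFun_nonneg ht,
    klFun_nonneg (mul_nonneg hs ht), hst]

theorem KLDiv_prod_add {α μ : Measure Z} {β ν : Measure W}
    [IsFiniteMeasure α] [IsFiniteMeasure β] [IsFiniteMeasure μ] [IsFiniteMeasure ν]
    (hα : α ≪ μ) (hβ : β ≪ ν) :
    KLDiv (α.prod β) (μ.prod ν) + α univ * ν univ + μ univ * β univ
      = KLDiv α μ * β univ + α univ * KLDiv β ν + α univ * β univ + μ univ * ν univ := by
  set f : Z → ℝ := fun x => (α.rnDeriv μ x).toReal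
  set g : W → ℝ := fun y => (β.rnDeriv ν y).toReal
  have hf : Measurable f := (Measure.measurable_rnDeriv α μ).ennreal_toReal
  have hg : Measurable g := (Measure.measurable_rnDeriv β ν).ennreal_toReal
  have hKL : KLDiv (α.prod β) (μ.prod ν)
      = ∫⁻ z, ENNReal.ofReal (klFun (f z.1 * g z.2)) ∂(μ.prod ν) := by
    rw [KLDiv_eq_lintegral_klFun (hα.prod hβ)]
    refine lintegral_congr_ae ((Measure.rnDeriv_prod_s12 hα hβ).mono fun z hz => ?_)
    simp only [hz, ENNReal.toReal_mul, f, g]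
  have hsplit := lintegral_congr (μ := μ.prod ν) fun z =>
    ofReal_klFun_mul_add (ENNReal.toReal_nonneg (a := α.rnDeriv μ z.1))
      (ENNReal.toReal_nonneg (a := β.rnDeriv ν z.2))
  simp (disch := fun_prop) only [lintegral_add_left] at hsplit
  have h1 : AEMeasurable (fun _ => 1 : Z → ℝ≥0∞) μ := aemeasurable_const
  have h1' : AEMeasurable (fun _ => 1 : W → ℝ≥0∞) ν := aemeasurable_const
  have hF : AEMeasurable (fun x => ENNReal.ofReal (f x)) μ := by fun_prop
  have hG : AEMeasurable (fun y => ENNReal.ofReal (g y)) ν := by fun_prop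
  have hKF : AEMeasurable (fun x => ENNReal.ofReal (klFun (f x))) μ := by fun_prop
  have hKG : AEMeasurable (fun y => ENNReal.ofReal (klFun (g y))) ν := by fun_prop
  rw [lintegral_prod_mul hF h1', lintegral_prod_mul h1 hG, lintegral_prod_mul hKF hG,
    lintegral_prod_mul hF hKG, lintegral_prod_mul hF hG, lintegral_prod_mul h1 h1'] at hsplit
  simpa [hKL, KLDiv_eq_lintegral_klFun, hα, hβ, lintegral_ofReal_toReal_rnDeriv, f, g]
    using hsplit

lemma KLDiv_prod_eq_top_of_left {α μ : Measure Z} {β ν : Measure W} [SFinite β] [SFinite ν]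
    (hα : ¬ α ≪ μ) (hβ : β ≠ 0) : KLDiv (α.prod β) (μ.prod ν) = ∞ :=
  if_neg fun h => hα (Measure.AbsolutelyContinuous.of_prod_left h hβ)

lemma KLDiv_prod_eq_top_of_right {α μ : Measure Z} {β ν : Measure W}
    [SFinite α] [SFinite β] [SFinite μ] [SFinite ν]
    (hβ : ¬ β ≪ ν) (hα : α ≠ 0) : KLDiv (α.prod β) (μ.prod ν) = ∞ :=
  if_neg fun h => hβ (Measure.AbsolutelyContinuous.of_prod_right h hα)

theorem KLDiv_prod_self_add_KLDiv_prod_self {α β μ : Measure Z}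
    [IsFiniteMeasure α] [IsFiniteMeasure β] [IsFiniteMeasure μ] (hm : α univ = β univ) :
    KLDiv (α.prod α) (μ.prod μ) + KLDiv (β.prod β) (μ.prod μ)
      = 2 * KLDiv (α.prod β) (μ.prod μ) := by
  by_cases hα : α ≪ μ
  swap
  · have hα0 : α ≠ 0 := fun h => hα (h ▸ Measure.AbsolutelyContinuous.zero μ)
    have hβ0 : β ≠ 0 := by simpa [← Measure.measure_univ_eq_zero, hm] using hα0
    simp [KLDiv_prod_eq_top_of_left hα hα0, KLDiv_prod_eq_top_of_left hα hβ0]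
  by_cases hβ : β ≪ μ
  swap
  · have hβ0 : β ≠ 0 := fun h => hβ (h ▸ Measure.AbsolutelyContinuous.zero μ)
    have hα0 : α ≠ 0 := by simpa [← Measure.measure_univ_eq_zero, hm] using hβ0
    simp [KLDiv_prod_eq_top_of_right hβ hβ0, KLDiv_prod_eq_top_of_right hβ hα0]
  have hαα := KLDiv_prod_add hα hα
  have hββ := KLDiv_prod_add hβ hβ
  have hαβ := KLDiv_prod_add hα hβ
  rw [hm] at hαα hαβ
  set c := β univ * μ univ + μ univ * β univ
  refine (ENNReal.add_left_inj (a := c + c) (by finiteness)).mp ?_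
  calc KLDiv (α.prod α) (μ.prod μ) + KLDiv (β.prod β) (μ.prod μ) + (c + c)
      = (KLDiv (α.prod α) (μ.prod μ) + β univ * μ univ + μ univ * β univ)
        + (KLDiv (β.prod β) (μ.prod μ) + β univ * μ univ + μ univ * β univ) := by ring
    _ = 2 * (KLDiv (α.prod β) (μ.prod μ) + β univ * μ univ + μ univ * β univ) := by
      rw [hαα, hββ, hαβ]; ring
    _ = 2 * KLDiv (α.prod β) (μ.prod μ) + (c + c) := by ring

end KLDivProd

lemma ENNReal.eq_and_eq_of_add_le_two_mul {a b c : ℝ≥0∞} (hb : a ≤ b) (hc : a ≤ c)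
    (h : b + c ≤ 2 * a) : a = b ∧ a = c := by
  rcases eq_or_ne a ∞ with rfl | ha
  · exact ⟨(top_le_iff.mp hb).symm, (top_le_iff.mp hc).symm⟩
  rw [two_mul] at h
  refine ⟨hb.antisymm ?_, hc.antisymm ?_⟩
  · exact (ENNReal.add_le_add_iff_right ha).mp ((add_le_add le_rfl hc).trans h)
  · exact (ENNReal.add_le_add_iff_left ha).mp ((add_le_add hb le_rfl).trans h)

theorem Feps_self_add_Feps_self_le {X Y : Type*} [MetricSpace X] [MeasurableSpace X]
    [MetricSpace Y] [MeasurableSpace Y] (μ : Measure X) (ν : Measure Y)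
    [IsFiniteMeasure μ] [IsFiniteMeasure ν] (lam : ℝ≥0 → ℝ≥0) (ρ ε : ℝ≥0)
    {π γ : Measure (X × Y)} [IsFiniteMeasure π] [IsFiniteMeasure γ]
    (hker : (∫⁻ z, gwKer lam z ∂(π.prod π)) + (∫⁻ z, gwKer lam z ∂(γ.prod γ)) ≤
      2 * ∫⁻ z, gwKer lam z ∂(π.prod γ))
    (hmass : π univ = γ univ) :
    Feps lam ρ ε μ ν π π + Feps lam ρ ε μ ν γ γ ≤ 2 * Feps lam ρ ε μ ν π γ := by
  have hfst := KLDiv_prod_self_add_KLDiv_prod_self (μ := μ) (α := π.fst) (β := γ.fst)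
    (by rw [Measure.fst_univ, Measure.fst_univ, hmass])
  have hsnd := KLDiv_prod_self_add_KLDiv_prod_self (μ := ν) (α := π.snd) (β := γ.snd)
    (by rw [Measure.snd_univ, Measure.snd_univ, hmass])
  have hjoint := KLDiv_prod_self_add_KLDiv_prod_self (μ := μ.prod ν) hmass
  have hregroup : ∀ k k' a a' b b' e e' : ℝ≥0∞,
      (k + ρ * a + ρ * b + ε * e) + (k' + ρ * a' + ρ * b' + ε * e')
        = (k + k') + (ρ * (a + a') + ρ * (b + b') + ε * (e + e')) := by
    intros; ring
  rw [Feps, Feps, Feps, hregroup, hfst, hsnd, hjoint]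
  refine (add_le_add hker le_rfl).trans_eq ?_
  ring

theorem ugw_entropic_relaxation_tight_general
    {X Y : Type*}
    [MetricSpace X] [MeasurableSpace X]
    [MetricSpace Y] [MeasurableSpace Y]
    (μ : Measure X) (ν : Measure Y) [IsFiniteMeasure μ] [IsFiniteMeasure ν]
    (lam : ℝ≥0 → ℝ≥0) (ρ ε : ℝ≥0)
    (hneg : ∀ η₁ η₂ : Measure (X × Y), IsFiniteMeasure η₁ → IsFiniteMeasure η₂ →
      η₁ Set.univ = η₂ Set.univ →
      (∫⁻ z, gwKer lam z ∂(η₁.prod η₁)) + (∫⁻ z, gwKer lam z ∂(η₂.prod η₂)) ≤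
        2 * ∫⁻ z, gwKer lam z ∂(η₁.prod η₂))
    (πs γs : Measure (X × Y)) (hπs : IsFiniteMeasure πs) (hγs : IsFiniteMeasure γs)
    (hmass : πs Set.univ = γs Set.univ)
    (hmin : ∀ π γ : Measure (X × Y), IsFiniteMeasure π → IsFiniteMeasure γ →
      π Set.univ = γ Set.univ → Feps lam ρ ε μ ν πs γs ≤ Feps lam ρ ε μ ν π γ) :
    Feps lam ρ ε μ ν πs γs = Feps lam ρ ε μ ν πs πs ∧
    Feps lam ρ ε μ ν πs γs = Feps lam ρ ε μ ν γs γs :=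
  ENNReal.eq_and_eq_of_add_le_two_mul (hmin πs πs hπs hπs rfl) (hmin γs γs hγs hγs rfl)
    (Feps_self_add_Feps_self_le μ ν lam ρ ε (hneg πs γs hπs hγs hmass) hmass)

/-- Tightness of the bi-convex relaxation for the entropic
KL-unbalanced Gromov--Wasserstein problem: if the kernel `λ(|d_X − d_Y|)` is negative
semi-definite on differences of finite measures with equal mass, then every minimizer
`(π*, γ*)` of `F_ε` over pairs of finite measures with equal total mass satisfies
`F_ε(π*,γ*) = F_ε(π*,π*) = F_ε(γ*,γ*)`. -/
theorem ugw_entropic_relaxation_tight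
    {X Y : Type*}
    [MetricSpace X] [CompactSpace X] [MeasurableSpace X] [BorelSpace X]
    [MetricSpace Y] [CompactSpace Y] [MeasurableSpace Y] [BorelSpace Y]
    (μ : Measure X) (ν : Measure Y) [IsFiniteMeasure μ] [IsFiniteMeasure ν]
    (lam : ℝ≥0 → ℝ≥0) (ρ ε : ℝ≥0) (hρ : 0 < ρ)
    (hneg : ∀ η₁ η₂ : Measure (X × Y), IsFiniteMeasure η₁ → IsFiniteMeasure η₂ →
      η₁ Set.univ = η₂ Set.univ →
      (∫⁻ z, gwKer lam z ∂(η₁.prod η₁)) + (∫⁻ z, gwKer lam z ∂(η₂.prod η₂)) ≤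
        2 * ∫⁻ z, gwKer lam z ∂(η₁.prod η₂))
    (πs γs : Measure (X × Y)) (hπs : IsFiniteMeasure πs) (hγs : IsFiniteMeasure γs)
    (hmass : πs Set.univ = γs Set.univ)
    (hmin : ∀ π γ : Measure (X × Y), IsFiniteMeasure π → IsFiniteMeasure γ →
      π Set.univ = γ Set.univ → Feps lam ρ ε μ ν πs γs ≤ Feps lam ρ ε μ ν π γ) :
    Feps lam ρ ε μ ν πs γs = Feps lam ρ ε μ ν πs πs ∧
    Feps lam ρ ε μ ν πs γs = Feps lam ρ ε μ ν γs γs :=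
  ugw_entropic_relaxation_tight_general μ ν lam ρ ε hneg πs γs hπs hγs hmass hmin

end
end

section
/- Let μ, ν be finite positive Borel measures on spaces X and Y respectively, and let π, γ be finite positive Borel measures on X × Y with equal total mass m(π) = m(γ). Then, as an equality in [0,+∞], KL(π⊗γ | (μ⊗ν)⊗(μ⊗ν)) = m(π)·KL(π|μ⊗ν) + m(γ)·KL(γ|μ⊗ν) + (1/2)·(m(π) − m(μ)·m(ν))² + (1/2)·(m(γ) − m(μ)·m(ν))². -/
open MeasureTheory ENNReal NNReal

noncomputable section

lemma psi_nonneg {t : ℝ} (ht : 0 ≤ t) : 0 ≤ t * Real.log t - t + 1 := by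
  rcases ht.eq_or_lt with rfl | ht
  · simp
  · have h := Real.log_le_sub_one_of_pos (inv_pos.2 ht)
    rw [Real.log_inv] at h
    have h2 : (-Real.log t) * t ≤ (t⁻¹ - 1) * t := mul_le_mul_of_nonneg_right h ht.le
    rw [sub_mul, inv_mul_cancel₀ ht.ne'] at h2
    nlinarith

lemma key_pointwise {a b : ℝ} (ha : 0 ≤ a) (hb : 0 ≤ b) :
    ENNReal.ofReal (a * b * Real.log (a * b) - a * b + 1) + ENNReal.ofReal a + ENNReal.ofReal b =
    ENNReal.ofReal (a * Real.log a - a + 1) * ENNReal.ofReal b +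
      ENNReal.ofReal a * ENNReal.ofReal (b * Real.log b - b + 1) +
      ENNReal.ofReal a * ENNReal.ofReal b + 1 := by
  have h1 := psi_nonneg ha
  have h2 := psi_nonneg hb
  have hab := psi_nonneg (mul_nonneg ha hb)
  rw [← ENNReal.ofReal_one, ← ENNReal.ofReal_mul h1, ← ENNReal.ofReal_mul ha,
    ← ENNReal.ofReal_mul ha,
    ← ENNReal.ofReal_add hab ha,
    ← ENNReal.ofReal_add (add_nonneg hab ha) hb,
    ← ENNReal.ofReal_add (mul_nonneg h1 hb) (mul_nonneg ha h2),
    ← ENNReal.ofReal_add (add_nonneg (mul_nonneg h1 hb) (mul_nonneg ha h2)) (mul_nonneg ha hb),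
    ← ENNReal.ofReal_add
      (add_nonneg (add_nonneg (mul_nonneg h1 hb) (mul_nonneg ha h2)) (mul_nonneg ha hb))
      (zero_le_one : (0:ℝ) ≤ 1)]
  congr 1
  have hlog : a * b * Real.log (a * b) = a * b * Real.log a + a * b * Real.log b := by
    rcases eq_or_ne a 0 with rfl | ha0
    · simp
    rcases eq_or_ne b 0 with rfl | hb0
    · simp
    · rw [Real.log_mul ha0 hb0]; ring
  rw [hlog]; ring

lemma rnDeriv_prod_ae {α β : Type*} [MeasurableSpace α] [MeasurableSpace β]
    (ρ₁ : Measure α) (ρ₂ : Measure β) (π : Measure α) (γ : Measure β)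
    [IsFiniteMeasure ρ₁] [IsFiniteMeasure ρ₂] [IsFiniteMeasure π] [IsFiniteMeasure γ]
    (hπ : π ≪ ρ₁) (hγ : γ ≪ ρ₂) :
    (π.prod γ).rnDeriv (ρ₁.prod ρ₂)
      =ᵐ[ρ₁.prod ρ₂] fun p => π.rnDeriv ρ₁ p.1 * γ.rnDeriv ρ₂ p.2 := by
  have hmeas : Measurable fun p : α × β => π.rnDeriv ρ₁ p.1 * γ.rnDeriv ρ₂ p.2 :=
    ((Measure.measurable_rnDeriv π ρ₁).comp measurable_fst).mul
      ((Measure.measurable_rnDeriv γ ρ₂).comp measurable_snd)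
  have hprod : π.prod γ =
      (ρ₁.prod ρ₂).withDensity fun p => π.rnDeriv ρ₁ p.1 * γ.rnDeriv ρ₂ p.2 := by
    refine Measure.prod_eq fun s t hs ht => ?_
    rw [withDensity_apply _ (hs.prod ht), ← Measure.prod_restrict,
      lintegral_prod_mul (Measure.measurable_rnDeriv π ρ₁).aemeasurable
        (Measure.measurable_rnDeriv γ ρ₂).aemeasurable,
      Measure.setLIntegral_rnDeriv hπ, Measure.setLIntegral_rnDeriv hγ]
  rw [hprod]
  exact Measure.rnDeriv_withDensity (ρ₁.prod ρ₂) hmeas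

lemma kl_core {α : Type*} [MeasurableSpace α] (ρ π γ : Measure α)
    [IsFiniteMeasure ρ] [IsFiniteMeasure π] [IsFiniteMeasure γ]
    (hπ : π ≪ ρ) (hγ : γ ≪ ρ) (hmass : π Set.univ = γ Set.univ) :
    KLDiv (π.prod γ) (ρ.prod ρ) =
      π Set.univ * KLDiv π ρ + γ Set.univ * KLDiv γ ρ
      + ENNReal.ofReal (((π Set.univ).toReal - (ρ Set.univ).toReal) ^ 2 / 2)
      + ENNReal.ofReal (((γ Set.univ).toReal - (ρ Set.univ).toReal) ^ 2 / 2) := by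
  have hAC : π.prod γ ≪ ρ.prod ρ := hπ.prod hγ
  have hfm : Measurable fun x => (π.rnDeriv ρ x).toReal :=
    (Measure.measurable_rnDeriv π ρ).ennreal_toReal
  have hgm : Measurable fun x => (γ.rnDeriv ρ x).toReal :=
    (Measure.measurable_rnDeriv γ ρ).ennreal_toReal
  -- the four basic functions
  set F : α → ℝ≥0∞ := fun x => ENNReal.ofReal ((π.rnDeriv ρ x).toReal
    * Real.log (π.rnDeriv ρ x).toReal - (π.rnDeriv ρ x).toReal + 1) with hFdef
  set G : α → ℝ≥0∞ := fun x => ENNReal.ofReal ((γ.rnDeriv ρ x).toReal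
    * Real.log (γ.rnDeriv ρ x).toReal - (γ.rnDeriv ρ x).toReal + 1) with hGdef
  set A : α → ℝ≥0∞ := fun x => ENNReal.ofReal (π.rnDeriv ρ x).toReal with hAdef
  set B : α → ℝ≥0∞ := fun x => ENNReal.ofReal (γ.rnDeriv ρ x).toReal with hBdef
  have hFm : Measurable F :=
    (((hfm.mul (Real.measurable_log.comp hfm)).sub hfm).add_const 1).ennreal_ofReal
  have hGm : Measurable G :=
    (((hgm.mul (Real.measurable_log.comp hgm)).sub hgm).add_const 1).ennreal_ofReal
  have hAm : Measurable A := hfm.ennreal_ofReal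
  have hBm : Measurable B := hgm.ennreal_ofReal
  have hP : KLDiv π ρ = ∫⁻ x, F x ∂ρ := by simp only [KLDiv, if_pos hπ, hFdef]
  have hQ : KLDiv γ ρ = ∫⁻ x, G x ∂ρ := by simp only [KLDiv, if_pos hγ, hGdef]
  have hfae : ∫⁻ x, A x ∂ρ = π Set.univ := by
    rw [← Measure.lintegral_rnDeriv hπ]
    refine lintegral_congr_ae ?_
    filter_upwards [Measure.rnDeriv_lt_top π ρ] with x hx
    simp [hAdef, ENNReal.ofReal_toReal hx.ne]
  have hgae : ∫⁻ x, B x ∂ρ = γ Set.univ := by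
    rw [← Measure.lintegral_rnDeriv hγ]
    refine lintegral_congr_ae ?_
    filter_upwards [Measure.rnDeriv_lt_top γ ρ] with x hx
    simp [hBdef, ENNReal.ofReal_toReal hx.ne]
  -- KLDiv of the product measure as an explicit integral
  have hKL : KLDiv (π.prod γ) (ρ.prod ρ) =
      ∫⁻ p, ENNReal.ofReal ((π.rnDeriv ρ p.1).toReal * (γ.rnDeriv ρ p.2).toReal
        * Real.log ((π.rnDeriv ρ p.1).toReal * (γ.rnDeriv ρ p.2).toReal)
        - (π.rnDeriv ρ p.1).toReal * (γ.rnDeriv ρ p.2).toReal + 1) ∂(ρ.prod ρ) := by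
    simp only [KLDiv, if_pos hAC]
    refine lintegral_congr_ae ?_
    filter_upwards [rnDeriv_prod_ae ρ ρ π γ hπ hγ] with p hp
    rw [hp, ENNReal.toReal_mul]
  -- the integrated key identity
  have hid : (∫⁻ p, ENNReal.ofReal ((π.rnDeriv ρ p.1).toReal * (γ.rnDeriv ρ p.2).toReal
        * Real.log ((π.rnDeriv ρ p.1).toReal * (γ.rnDeriv ρ p.2).toReal)
        - (π.rnDeriv ρ p.1).toReal * (γ.rnDeriv ρ p.2).toReal + 1) ∂(ρ.prod ρ))
      + π Set.univ * ρ Set.univ + ρ Set.univ * γ Set.univ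
      = (∫⁻ x, F x ∂ρ) * γ Set.univ + π Set.univ * (∫⁻ x, G x ∂ρ)
        + π Set.univ * γ Set.univ + ρ Set.univ * ρ Set.univ := by
    have e1 : ∫⁻ p : α × α, A p.1 ∂(ρ.prod ρ) = π Set.univ * ρ Set.univ := by
      calc ∫⁻ p : α × α, A p.1 ∂(ρ.prod ρ)
          = ∫⁻ p : α × α, A p.1 * (fun _ : α => (1:ℝ≥0∞)) p.2 ∂(ρ.prod ρ) := by simp
        _ = (∫⁻ x, A x ∂ρ) * ∫⁻ _, 1 ∂ρ :=
            lintegral_prod_mul hAm.aemeasurable aemeasurable_const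
        _ = π Set.univ * ρ Set.univ := by rw [hfae, lintegral_one]
    have e2 : ∫⁻ p : α × α, B p.2 ∂(ρ.prod ρ) = ρ Set.univ * γ Set.univ := by
      calc ∫⁻ p : α × α, B p.2 ∂(ρ.prod ρ)
          = ∫⁻ p : α × α, (fun _ : α => (1:ℝ≥0∞)) p.1 * B p.2 ∂(ρ.prod ρ) := by simp
        _ = (∫⁻ _, 1 ∂ρ) * ∫⁻ x, B x ∂ρ :=
            lintegral_prod_mul aemeasurable_const hBm.aemeasurable
        _ = ρ Set.univ * γ Set.univ := by rw [hgae, lintegral_one]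
    have e3 : ∫⁻ p : α × α, F p.1 * B p.2 ∂(ρ.prod ρ) = (∫⁻ x, F x ∂ρ) * γ Set.univ := by
      rw [lintegral_prod_mul hFm.aemeasurable hBm.aemeasurable, hgae]
    have e4 : ∫⁻ p : α × α, A p.1 * G p.2 ∂(ρ.prod ρ) = π Set.univ * ∫⁻ x, G x ∂ρ := by
      rw [lintegral_prod_mul hAm.aemeasurable hGm.aemeasurable, hfae]
    have e5 : ∫⁻ p : α × α, A p.1 * B p.2 ∂(ρ.prod ρ) = π Set.univ * γ Set.univ := by
      rw [lintegral_prod_mul hAm.aemeasurable hBm.aemeasurable, hfae, hgae]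
    have e6 : ∫⁻ _ : α × α, (1:ℝ≥0∞) ∂(ρ.prod ρ) = ρ Set.univ * ρ Set.univ := by
      rw [lintegral_one,
        show (Set.univ : Set (α × α)) = Set.univ ×ˢ Set.univ from Set.univ_prod_univ.symm,
        Measure.prod_prod]
    have hptw : ∫⁻ p, (ENNReal.ofReal ((π.rnDeriv ρ p.1).toReal * (γ.rnDeriv ρ p.2).toReal
        * Real.log ((π.rnDeriv ρ p.1).toReal * (γ.rnDeriv ρ p.2).toReal)
        - (π.rnDeriv ρ p.1).toReal * (γ.rnDeriv ρ p.2).toReal + 1) + A p.1 + B p.2) ∂(ρ.prod ρ)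
        = ∫⁻ p, (F p.1 * B p.2 + A p.1 * G p.2 + A p.1 * B p.2 + 1) ∂(ρ.prod ρ) :=
      lintegral_congr fun p => key_pointwise ENNReal.toReal_nonneg ENNReal.toReal_nonneg
    rw [lintegral_add_right (g := fun p : α × α => B p.2) _ (hBm.comp measurable_snd),
      lintegral_add_right (g := fun p : α × α => A p.1) _ (hAm.comp measurable_fst)] at hptw
    rw [lintegral_add_right (g := fun _ : α × α => (1:ℝ≥0∞)) _ measurable_const,
      lintegral_add_right (g := fun p : α × α => A p.1 * B p.2) _
        ((hAm.comp measurable_fst).mul (hBm.comp measurable_snd)),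
      lintegral_add_right (g := fun p : α × α => A p.1 * G p.2) _
        ((hAm.comp measurable_fst).mul (hGm.comp measurable_snd))] at hptw
    rw [e1, e2] at hptw
    rw [e3, e4, e5, e6] at hptw
    exact hptw
  -- final algebra
  rw [hKL, hP, hQ, ← hmass]
  set K := ∫⁻ p, ENNReal.ofReal ((π.rnDeriv ρ p.1).toReal * (γ.rnDeriv ρ p.2).toReal
        * Real.log ((π.rnDeriv ρ p.1).toReal * (γ.rnDeriv ρ p.2).toReal)
        - (π.rnDeriv ρ p.1).toReal * (γ.rnDeriv ρ p.2).toReal + 1) ∂(ρ.prod ρ) with hKdef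
  rw [← hmass] at hid
  set P := ∫⁻ x, F x ∂ρ
  set Q := ∫⁻ x, G x ∂ρ
  set mp := π Set.univ with hmp
  set mr := ρ Set.univ with hmr
  have hfin : mp * mr + mr * mp ≠ ∞ :=
    ENNReal.add_ne_top.2 ⟨ENNReal.mul_ne_top (measure_ne_top _ _) (measure_ne_top _ _),
      ENNReal.mul_ne_top (measure_ne_top _ _) (measure_ne_top _ _)⟩
  have hsq : ENNReal.ofReal ((mp.toReal - mr.toReal) ^ 2 / 2)
      + ENNReal.ofReal ((mp.toReal - mr.toReal) ^ 2 / 2) + (mp * mr + mr * mp)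
      = mp * mp + mr * mr := by
    have hx : mp = ENNReal.ofReal mp.toReal := (ENNReal.ofReal_toReal (measure_ne_top _ _)).symm
    have hy : mr = ENNReal.ofReal mr.toReal := (ENNReal.ofReal_toReal (measure_ne_top _ _)).symm
    set x := mp.toReal
    set y := mr.toReal
    have hx0 : 0 ≤ x := ENNReal.toReal_nonneg
    have hy0 : 0 ≤ y := ENNReal.toReal_nonneg
    have hs0 : 0 ≤ (x - y) ^ 2 / 2 := by positivity
    rw [hx, hy, ← ENNReal.ofReal_mul hx0, ← ENNReal.ofReal_mul hy0, ← ENNReal.ofReal_mul hx0,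
      ← ENNReal.ofReal_mul hy0, ← ENNReal.ofReal_add (mul_nonneg hx0 hy0) (mul_nonneg hy0 hx0),
      ← ENNReal.ofReal_add hs0 hs0,
      ← ENNReal.ofReal_add (add_nonneg hs0 hs0) (add_nonneg (mul_nonneg hx0 hy0) (mul_nonneg hy0 hx0)),
      ← ENNReal.ofReal_add (mul_nonneg hx0 hx0) (mul_nonneg hy0 hy0)]
    congr 1
    ring
  refine (ENNReal.add_left_inj hfin).1 ?_
  calc K + (mp * mr + mr * mp)
      = K + mp * mr + mr * mp := by rw [add_assoc]
    _ = P * mp + mp * Q + mp * mp + mr * mr := hid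
    _ = mp * P + mp * Q + (mp * mp + mr * mr) := by ring
    _ = mp * P + mp * Q + (ENNReal.ofReal ((mp.toReal - mr.toReal) ^ 2 / 2)
          + ENNReal.ofReal ((mp.toReal - mr.toReal) ^ 2 / 2) + (mp * mr + mr * mp)) := by
        rw [hsq]
    _ = mp * P + mp * Q + ENNReal.ofReal ((mp.toReal - mr.toReal) ^ 2 / 2)
          + ENNReal.ofReal ((mp.toReal - mr.toReal) ^ 2 / 2) + (mp * mr + mr * mp) := by ring


/-- Separability of the quadratic KL divergence under the equal-mass
constraint: for finite measures `π, γ` on `X × Y` with `m(π) = m(γ)`,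
`KL(π⊗γ | (μ⊗ν)⊗(μ⊗ν)) = m(π)·KL(π|μ⊗ν) + m(γ)·KL(γ|μ⊗ν)
  + ½(m(π) − m(μ)m(ν))² + ½(m(γ) − m(μ)m(ν))²`. -/
theorem kl_quadratic_separable
    {X Y : Type*} [MeasurableSpace X] [MeasurableSpace Y]
    (μ : Measure X) (ν : Measure Y) [IsFiniteMeasure μ] [IsFiniteMeasure ν]
    (π γ : Measure (X × Y)) [IsFiniteMeasure π] [IsFiniteMeasure γ]
    (hmass : π Set.univ = γ Set.univ) :
    KLDiv (π.prod γ) ((μ.prod ν).prod (μ.prod ν)) =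
      π Set.univ * KLDiv π (μ.prod ν) + γ Set.univ * KLDiv γ (μ.prod ν)
      + ENNReal.ofReal
          (((π Set.univ).toReal - (μ Set.univ).toReal * (ν Set.univ).toReal) ^ 2 / 2)
      + ENNReal.ofReal
          (((γ Set.univ).toReal - (μ Set.univ).toReal * (ν Set.univ).toReal) ^ 2 / 2) := by
  have hρu : (μ.prod ν) Set.univ = μ Set.univ * ν Set.univ := by
    rw [← Measure.prod_prod, Set.univ_prod_univ]
  by_cases hπ : π ≪ μ.prod ν
  · by_cases hγ : γ ≪ μ.prod ν
    · have h := kl_core (μ.prod ν) π γ hπ hγ hmass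
      rw [hρu, ENNReal.toReal_mul] at h
      exact h
    · -- γ is not absolutely continuous
      obtain ⟨s, hs0, hγs⟩ : ∃ s, (μ.prod ν) s = 0 ∧ γ s ≠ 0 := by
        by_contra hc
        push_neg at hc
        exact hγ fun s hs => hc s hs
      have hγu : γ Set.univ ≠ 0 := fun h => hγs (measure_mono_null (Set.subset_univ s) h)
      have hπu : π Set.univ ≠ 0 := by rw [hmass]; exact hγu
      have hnAC : ¬ π.prod γ ≪ (μ.prod ν).prod (μ.prod ν) := by
        intro h
        have h0 : ((μ.prod ν).prod (μ.prod ν)) (Set.univ ×ˢ s) = 0 := by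
          rw [Measure.prod_prod, hs0, mul_zero]
        have h1 := h h0
        rw [Measure.prod_prod] at h1
        rcases mul_eq_zero.mp h1 with h2 | h2
        · exact hπu h2
        · exact hγs h2
      have hL : KLDiv (π.prod γ) ((μ.prod ν).prod (μ.prod ν)) = ∞ := by
        simp only [KLDiv]; rw [if_neg hnAC]
      have hγKL : KLDiv γ (μ.prod ν) = ∞ := by
        simp only [KLDiv]; rw [if_neg hγ]
      rw [hL, hγKL, ENNReal.mul_top hγu]
      simp
  · -- π is not absolutely continuous
    obtain ⟨s, hs0, hπs⟩ : ∃ s, (μ.prod ν) s = 0 ∧ π s ≠ 0 := by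
      by_contra hc
      push_neg at hc
      exact hπ fun s hs => hc s hs
    have hπu : π Set.univ ≠ 0 := fun h => hπs (measure_mono_null (Set.subset_univ s) h)
    have hγu : γ Set.univ ≠ 0 := by rw [← hmass]; exact hπu
    have hnAC : ¬ π.prod γ ≪ (μ.prod ν).prod (μ.prod ν) := by
      intro h
      have h0 : ((μ.prod ν).prod (μ.prod ν)) (s ×ˢ Set.univ) = 0 := by
        rw [Measure.prod_prod, hs0, zero_mul]
      have h1 := h h0
      rw [Measure.prod_prod] at h1
      rcases mul_eq_zero.mp h1 with h2 | h2
      · exact hπs h2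
      · exact hγu h2
    have hL : KLDiv (π.prod γ) ((μ.prod ν).prod (μ.prod ν)) = ∞ := by
      simp only [KLDiv]; rw [if_neg hnAC]
    have hπKL : KLDiv π (μ.prod ν) = ∞ := by
      simp only [KLDiv]; rw [if_neg hπ]
    rw [hL, hπKL, ENNReal.mul_top hπu]
    simp

end
end

section
/- Let ψ(x) = x − log(x) − 1 for x > 0 (the reverse entropy of the Kullback–Leibler entropy φ(x) = x·log(x) − x + 1). Then for all r, s > 0 and c ∈ [0,∞), the infimum inf_{θ > 0} [ θ·c + θ·ψ(r²/θ) + θ·ψ(s²/θ) ] equals r² + s² − 2·r·s·exp(−c/2), and it is attained at θ* = r·s·exp(−c/2). Consequently the Gaussian–Hellinger cone cost satisfies H_c(r², s²) = r² + s² − 2·r·s·e^{−c/2}. -/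
open MeasureTheory ENNReal NNReal

noncomputable section

/-- The Kullback--Leibler entropy function `φ(x) = x·log(x) − x + 1`. -/
def klEntropy (x : ℝ≥0) : ℝ≥0∞ :=
  ENNReal.ofReal ((x : ℝ) * Real.log (x : ℝ) - (x : ℝ) + 1)

lemma xlogx_lb {x : ℝ} (hx : 0 < x) : x - 1 ≤ x * Real.log x := by
  have h := Real.log_le_sub_one_of_pos (show (0:ℝ) < x⁻¹ by positivity)
  rw [Real.log_inv] at h
  have h2 := mul_le_mul_of_nonneg_left h hx.le
  have h3 : x * x⁻¹ = 1 := mul_inv_cancel₀ hx.ne'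
  nlinarith

lemma gh_lb (r s c θ : ℝ) (hr : 0 < r) (hs : 0 < s) (hθ : 0 < θ) :
    r ^ 2 + s ^ 2 - 2 * r * s * Real.exp (-c / 2)
      ≤ θ * c + (r ^ 2 - θ - θ * Real.log (r ^ 2 / θ))
          + (s ^ 2 - θ - θ * Real.log (s ^ 2 / θ)) := by
  set T := r * s * Real.exp (-c / 2) with hTdef
  have hT : 0 < T := by positivity
  have hu : θ / T - 1 ≤ (θ / T) * Real.log (θ / T) := xlogx_lb (by positivity)
  have hlogT : Real.log T = Real.log r + Real.log s + (-c / 2) := by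
    rw [hTdef, Real.log_mul (by positivity) (Real.exp_pos _).ne',
      Real.log_mul hr.ne' hs.ne', Real.log_exp]
  have hlogu : Real.log (θ / T) = Real.log θ - (Real.log r + Real.log s + (-c / 2)) := by
    rw [Real.log_div hθ.ne' hT.ne', hlogT]
  have hlr : Real.log (r ^ 2 / θ) = 2 * Real.log r - Real.log θ := by
    rw [Real.log_div (by positivity) hθ.ne', Real.log_pow]; push_cast; ring
  have hls : Real.log (s ^ 2 / θ) = 2 * Real.log s - Real.log θ := by
    rw [Real.log_div (by positivity) hθ.ne', Real.log_pow]; push_cast; ring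
  rw [hlr, hls]
  rw [hlogu] at hu
  have h2 := mul_le_mul_of_nonneg_left hu hT.le
  have h3 : T * (θ / T) = θ := by field_simp
  have key : T * (θ / T) - T ≤ θ * (Real.log θ - (Real.log r + Real.log s + (-c / 2))) := by
    calc T * (θ / T) - T = T * (θ / T - 1) := by ring
    _ ≤ T * ((θ / T) * (Real.log θ - (Real.log r + Real.log s + (-c / 2)))) := h2
    _ = (T * (θ / T)) * (Real.log θ - (Real.log r + Real.log s + (-c / 2))) := by ring
    _ = θ * (Real.log θ - (Real.log r + Real.log s + (-c / 2))) := by rw [h3]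
  rw [h3] at key
  nlinarith [key]

lemma gh_eq (r s c : ℝ) (hr : 0 < r) (hs : 0 < s) :
    ((r * s * Real.exp (-c / 2)) * c
        + (r ^ 2 - r * s * Real.exp (-c / 2)
            - (r * s * Real.exp (-c / 2)) * Real.log (r ^ 2 / (r * s * Real.exp (-c / 2))))
        + (s ^ 2 - r * s * Real.exp (-c / 2)
            - (r * s * Real.exp (-c / 2)) * Real.log (s ^ 2 / (r * s * Real.exp (-c / 2)))))
      = r ^ 2 + s ^ 2 - 2 * r * s * Real.exp (-c / 2) := by
  set T := r * s * Real.exp (-c / 2) with hTdef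
  have hT : 0 < T := by positivity
  have hlogT : Real.log T = Real.log r + Real.log s + (-c / 2) := by
    rw [hTdef, Real.log_mul (by positivity) (Real.exp_pos _).ne',
      Real.log_mul hr.ne' hs.ne', Real.log_exp]
  have hlr : Real.log (r ^ 2 / T) = Real.log r - Real.log s + c / 2 := by
    rw [Real.log_div (by positivity) hT.ne', Real.log_pow, hlogT]; push_cast; ring
  have hls : Real.log (s ^ 2 / T) = Real.log s - Real.log r + c / 2 := by
    rw [Real.log_div (by positivity) hT.ne', Real.log_pow, hlogT]; push_cast; ring
  rw [hlr, hls]; ring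

lemma reverseEnt_klEntropy {x : ℝ≥0} (hx : x ≠ 0) :
    reverseEnt klEntropy x = ENNReal.ofReal ((x : ℝ) - Real.log (x : ℝ) - 1) := by
  have hx' : (0:ℝ) < (x : ℝ) := by positivity
  rw [reverseEnt, if_neg hx, klEntropy, ← ENNReal.ofReal_coe_nnreal,
    ← ENNReal.ofReal_mul x.coe_nonneg]
  congr 1
  rw [NNReal.coe_inv, Real.log_inv]
  field_simp
  ring

lemma psi_nonneg_s16 {x : ℝ} (hx : 0 < x) : 0 ≤ x - Real.log x - 1 := by
  have := Real.log_le_sub_one_of_pos hx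
  linarith

lemma persp_pos (r s c : ℝ) (hr : 0 < r) (hs : 0 < s) (hc : 0 ≤ c) {θ : ℝ≥0} (hθ : θ ≠ 0) :
    persp klEntropy (ENNReal.ofReal c) (Real.toNNReal r ^ 2) (Real.toNNReal s ^ 2) θ
      = ENNReal.ofReal ((θ : ℝ) * c
          + (r ^ 2 - θ - θ * Real.log (r ^ 2 / (θ : ℝ)))
          + (s ^ 2 - θ - θ * Real.log (s ^ 2 / (θ : ℝ)))) := by
  have hθ' : (0:ℝ) < (θ : ℝ) := by positivity
  have hrn : Real.toNNReal r ≠ 0 := by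
    simp [Real.toNNReal_eq_zero]; linarith
  have hsn : Real.toNNReal s ≠ 0 := by
    simp [Real.toNNReal_eq_zero]; linarith
  have hr2 : (Real.toNNReal r ^ 2 / θ : ℝ≥0) ≠ 0 := div_ne_zero (pow_ne_zero _ hrn) hθ
  have hs2 : (Real.toNNReal s ^ 2 / θ : ℝ≥0) ≠ 0 := div_ne_zero (pow_ne_zero _ hsn) hθ
  have hca : ((Real.toNNReal r ^ 2 / θ : ℝ≥0) : ℝ) = r ^ 2 / (θ : ℝ) := by
    push_cast [Real.coe_toNNReal r hr.le]; ring
  have hcb : ((Real.toNNReal s ^ 2 / θ : ℝ≥0) : ℝ) = s ^ 2 / (θ : ℝ) := by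
    push_cast [Real.coe_toNNReal s hs.le]; ring
  have ha : (0:ℝ) < r ^ 2 / (θ : ℝ) := by positivity
  have hb : (0:ℝ) < s ^ 2 / (θ : ℝ) := by positivity
  rw [persp, if_neg hθ, Lcost, reverseEnt_klEntropy hr2, reverseEnt_klEntropy hs2, hca, hcb,
    ← ENNReal.ofReal_add hc (psi_nonneg_s16 ha),
    ← ENNReal.ofReal_add (add_nonneg hc (psi_nonneg_s16 ha)) (psi_nonneg_s16 hb),
    ← ENNReal.ofReal_coe_nnreal, ← ENNReal.ofReal_mul θ.coe_nonneg]
  congr 1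
  field_simp
  ring

/-- Computation of the Gaussian--Hellinger cone cost: with
`ψ(x) = x − log x − 1` the reverse KL entropy (so `θ·ψ(x/θ) = x − θ − θ·log(x/θ)`),
for `r, s > 0` and `c ≥ 0`,
`inf_{θ>0} [θc + θψ(r²/θ) + θψ(s²/θ)] = r² + s² − 2rs·e^{−c/2}`, the infimum being
attained at `θ* = rs·e^{−c/2}`; consequently `H_c(r²,s²) = r² + s² − 2rs·e^{−c/2}`. -/
theorem gaussian_hellinger_cone_cost (r s c : ℝ) (hr : 0 < r) (hs : 0 < s) (hc : 0 ≤ c) :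
    (⨅ θ : {θ : ℝ // 0 < θ},
        (θ.1 * c + (r ^ 2 - θ.1 - θ.1 * Real.log (r ^ 2 / θ.1))
          + (s ^ 2 - θ.1 - θ.1 * Real.log (s ^ 2 / θ.1))))
      = r ^ 2 + s ^ 2 - 2 * r * s * Real.exp (-c / 2) ∧
    ((r * s * Real.exp (-c / 2)) * c
        + (r ^ 2 - r * s * Real.exp (-c / 2)
            - (r * s * Real.exp (-c / 2)) * Real.log (r ^ 2 / (r * s * Real.exp (-c / 2))))
        + (s ^ 2 - r * s * Real.exp (-c / 2)
            - (r * s * Real.exp (-c / 2)) * Real.log (s ^ 2 / (r * s * Real.exp (-c / 2)))))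
      = r ^ 2 + s ^ 2 - 2 * r * s * Real.exp (-c / 2) ∧
    Hcost klEntropy (ENNReal.ofReal c) (Real.toNNReal r ^ 2) (Real.toNNReal s ^ 2)
      = ENNReal.ofReal (r ^ 2 + s ^ 2 - 2 * r * s * Real.exp (-c / 2)) := by
  have hT : (0:ℝ) < r * s * Real.exp (-c / 2) := by positivity
  have heq := gh_eq r s c hr hs
  refine ⟨?_, heq, ?_⟩
  · apply le_antisymm
    · have hbdd : BddBelow (Set.range fun θ : {θ : ℝ // 0 < θ} =>
          (θ.1 * c + (r ^ 2 - θ.1 - θ.1 * Real.log (r ^ 2 / θ.1))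
            + (s ^ 2 - θ.1 - θ.1 * Real.log (s ^ 2 / θ.1)))) := by
        refine ⟨r ^ 2 + s ^ 2 - 2 * r * s * Real.exp (-c / 2), ?_⟩
        rintro x ⟨θ, rfl⟩
        exact gh_lb r s c θ.1 hr hs θ.2
      exact ciInf_le_of_le hbdd ⟨r * s * Real.exp (-c / 2), hT⟩ (le_of_eq heq)
    · exact le_ciInf fun θ => gh_lb r s c θ.1 hr hs θ.2
  · rw [Hcost]
    apply le_antisymm
    · have hTn : (Real.toNNReal (r * s * Real.exp (-c / 2))) ≠ 0 := by
        simp [Real.toNNReal_eq_zero]; linarith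
      have hTc : ((Real.toNNReal (r * s * Real.exp (-c / 2)) : ℝ≥0) : ℝ)
          = r * s * Real.exp (-c / 2) := Real.coe_toNNReal _ hT.le
      refine iInf_le_of_le (Real.toNNReal (r * s * Real.exp (-c / 2))) ?_
      rw [persp_pos r s c hr hs hc hTn, hTc, heq]
    · refine le_iInf fun θ => ?_
      rcases eq_or_ne θ 0 with rfl | hθ
      · have h0 : persp klEntropy (ENNReal.ofReal c) (Real.toNNReal r ^ 2)
            (Real.toNNReal s ^ 2) 0
            = ENNReal.ofReal (r ^ 2 + s ^ 2) := by
          rw [persp, if_pos rfl]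
          have : klEntropy 0 = 1 := by
            simp [klEntropy]
          rw [this, one_mul, ← ENNReal.ofReal_coe_nnreal, ← ENNReal.ofReal_coe_nnreal,
            ← ENNReal.ofReal_add (NNReal.coe_nonneg _) (NNReal.coe_nonneg _)]
          congr 1
          push_cast [Real.coe_toNNReal r hr.le, Real.coe_toNNReal s hs.le]
          ring
        rw [h0]
        apply ENNReal.ofReal_le_ofReal
        nlinarith [hT]
      · rw [persp_pos r s c hr hs hc hθ]
        exact ENNReal.ofReal_le_ofReal
          (gh_lb r s c θ hr hs (by positivity))

end
end

section
/- For all c, r, s ∈ [0,∞), the infimum inf_{θ ≥ 0} [ θ·c + |r − θ| + |s − θ| ] equals r + s − min(r,s)·max(2 − c, 0). Consequently, for the total-variation entropy φ(x) = |x − 1| (whose reverse entropy satisfies θ·ψ(r/θ) = |r − θ|, with value r at θ = 0), the perspective transform satisfies H_c(r,s) = r + s − (r ∧ s)·(2 − c)₊. -/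
/-! For `c, r, s ≥ 0` the function `θ ↦ θ c + |r - θ| + |s - θ|` on `[0, ∞)` is convex and
piecewise linear with slope `c - 2` on `[0, r ∧ s]` and slope at least `c ≥ 0` beyond, so its
minimum is attained at `θ = 0` when `c ≥ 2` and at `θ = r ∧ s` otherwise. For the total-variation
entropy, `θ ψ(x / θ) = |x - θ|` for `θ > 0` and the `θ = 0` term is `r + s`, so every term of the
infimum defining `H_c(r, s)` is the `ofReal` of the corresponding real term. -/

open MeasureTheory ENNReal NNReal

noncomputable section

/-- The total-variation entropy function `φ(x) = |x − 1|`. -/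
def tvEntropy (x : ℝ≥0) : ℝ≥0∞ :=
  ENNReal.ofReal |(x : ℝ) - 1|

section PartialTransportCost

variable {c r s θ : ℝ}

theorem le_partialTransportCost (hc : 0 ≤ c) (hθ : 0 ≤ θ) :
    r + s - min r s * max (2 - c) 0 ≤ θ * c + |r - θ| + |s - θ| := by
  have := le_abs_self (r - θ); have := neg_abs_le (r - θ)
  have := le_abs_self (s - θ); have := neg_abs_le (s - θ)
  rcases le_total 2 c with h2c | hc2
  · rw [max_eq_right (by linarith)]
    nlinarith
  rw [max_eq_left (by linarith)]
  rcases le_total θ (min r s) with hθm | hmθ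
  · nlinarith [min_le_left r s, min_le_right r s]
  rcases min_cases r s with ⟨hm, -⟩ | ⟨hm, -⟩ <;> rw [hm] at hmθ ⊢ <;> nlinarith

theorem exists_partialTransportCost_eq (hr : 0 ≤ r) (hs : 0 ≤ s) :
    ∃ θ, 0 ≤ θ ∧ θ * c + |r - θ| + |s - θ| = r + s - min r s * max (2 - c) 0 := by
  by_cases h2c : 2 ≤ c
  · refine ⟨0, le_rfl, ?_⟩
    simp [max_eq_right (sub_nonpos.2 h2c), abs_of_nonneg hr, abs_of_nonneg hs]
  · refine ⟨min r s, le_min hr hs, ?_⟩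
    rw [max_eq_left (by linarith)]
    rcases min_cases r s with ⟨hm, hrs⟩ | ⟨hm, hsr⟩ <;> rw [hm]
    · rw [sub_self, abs_zero, abs_of_nonneg (by linarith)]; ring
    · rw [sub_self, abs_zero, abs_of_nonneg (by linarith)]; ring

theorem isLeast_partialTransportCost (hc : 0 ≤ c) (hr : 0 ≤ r) (hs : 0 ≤ s) :
    IsLeast (Set.range fun θ : ℝ≥0 => (θ : ℝ) * c + |r - θ| + |s - θ|)
      (r + s - min r s * max (2 - c) 0) := by
  obtain ⟨θ₀, hθ₀, hmin⟩ := exists_partialTransportCost_eq (c := c) hr hs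
  exact ⟨⟨⟨θ₀, hθ₀⟩, hmin⟩, by rintro _ ⟨θ, rfl⟩; exact le_partialTransportCost hc θ.2⟩

end PartialTransportCost

theorem mul_abs_div_sub_one {t : ℝ} (ht : 0 < t) (y : ℝ) : t * |y / t - 1| = |y - t| := by
  calc t * |y / t - 1| = |t * (y / t - 1)| := by rw [abs_mul, abs_of_pos ht]
    _ = |y - t| := by rw [mul_sub, mul_div_cancel₀ _ ht.ne', mul_one]

theorem tvEntropy_zero : tvEntropy 0 = 1 := by
  simp [tvEntropy]

theorem recessionConst_tvEntropy : recessionConst tvEntropy = 1 := by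
  refine Filter.Tendsto.limsup_eq ?_
  have h : Filter.Tendsto (fun r : ℝ≥0 => ENNReal.ofReal (1 - (r : ℝ)⁻¹))
      Filter.atTop (nhds 1) := by
    have := (tendsto_inv_atTop_zero.comp (tendsto_coe_atTop.2 Filter.tendsto_id))
    simpa using ENNReal.tendsto_ofReal ((tendsto_const_nhds (x := (1 : ℝ))).sub this)
  refine h.congr' ?_
  filter_upwards [Filter.eventually_ge_atTop 1] with x hx
  have hx1 : (1 : ℝ) ≤ x := hx
  rw [tvEntropy, abs_of_nonneg (by linarith), ← ENNReal.ofReal_coe_nnreal,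
    ← ENNReal.ofReal_div_of_pos (by linarith)]
  congr 1
  field_simp

theorem reverseEnt_tvEntropy (x : ℝ≥0) :
    reverseEnt tvEntropy x = ENNReal.ofReal |(x : ℝ) - 1| := by
  rcases eq_or_ne x 0 with rfl | hx
  · simp [reverseEnt, recessionConst_tvEntropy]
  have hx' : (0 : ℝ) < x := by positivity
  rw [reverseEnt, if_neg hx, tvEntropy, ← ENNReal.ofReal_coe_nnreal, ← ENNReal.ofReal_mul hx'.le,
    NNReal.coe_inv, ← one_div, mul_abs_div_sub_one hx', abs_sub_comm]

theorem coe_mul_reverseEnt_tvEntropy_div {θ : ℝ≥0} (hθ : θ ≠ 0) (x : ℝ≥0) :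
    (θ : ℝ≥0∞) * reverseEnt tvEntropy (x / θ) = ENNReal.ofReal |(x : ℝ) - θ| := by
  have hθ' : (0 : ℝ) < θ := by positivity
  rw [reverseEnt_tvEntropy, ← ENNReal.ofReal_coe_nnreal, ← ENNReal.ofReal_mul hθ'.le,
    NNReal.coe_div, mul_abs_div_sub_one hθ']

theorem persp_tvEntropy {c : ℝ} (hc : 0 ≤ c) (r s θ : ℝ≥0) :
    persp tvEntropy (ENNReal.ofReal c) r s θ
      = ENNReal.ofReal (θ * c + |(r : ℝ) - θ| + |(s : ℝ) - θ|) := by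
  rcases eq_or_ne θ 0 with rfl | hθ
  · simp [persp, tvEntropy_zero, ENNReal.ofReal_add]
  rw [persp, if_neg hθ, Lcost, mul_add, mul_add, coe_mul_reverseEnt_tvEntropy_div hθ,
    coe_mul_reverseEnt_tvEntropy_div hθ, ← ENNReal.ofReal_coe_nnreal,
    ← ENNReal.ofReal_mul θ.coe_nonneg,
    ← ENNReal.ofReal_add (by positivity) (abs_nonneg _),
    ← ENNReal.ofReal_add (by positivity) (abs_nonneg _)]

/-- **Statement 18.** Computation of the partial optimal transport cone cost: for
`c, r, s ≥ 0`, `inf_{θ ≥ 0} [θc + |r − θ| + |s − θ|] = r + s − min(r,s)·max(2 − c, 0)`;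
consequently, for the total-variation entropy `φ(x) = |x − 1|`,
`H_c(r,s) = r + s − (r ∧ s)·(2 − c)₊`. -/
theorem partial_ot_cone_cost (c r s : ℝ) (hc : 0 ≤ c) (hr : 0 ≤ r) (hs : 0 ≤ s) :
    (⨅ θ : {θ : ℝ // 0 ≤ θ}, (θ.1 * c + |r - θ.1| + |s - θ.1|))
      = r + s - min r s * max (2 - c) 0 ∧
    Hcost tvEntropy (ENNReal.ofReal c) (Real.toNNReal r) (Real.toNNReal s)
      = ENNReal.ofReal (r + s - min r s * max (2 - c) 0) := by
  -- `ℝ≥0` is by definition the subtype `{θ : ℝ // 0 ≤ θ}`.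
  have hinf : (⨅ θ : {θ : ℝ // 0 ≤ θ}, (θ.1 * c + |r - θ.1| + |s - θ.1|))
      = r + s - min r s * max (2 - c) 0 :=
    (isLeast_partialTransportCost hc hr hs).isGLB.ciInf_eq
  refine ⟨hinf, ?_⟩
  simp_rw [Hcost, persp_tvEntropy hc, Real.coe_toNNReal _ hr, Real.coe_toNNReal _ hs,
    ← ENNReal.ofReal_iInf, ← hinf]
  rfl

end
end
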